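/- arXiv:1402.5551 — 9 statements merged into one kernel-verified Lean document; each statement's English description precedes it below -/
import Mathlib

section
/- Let f, g : ℝ → ℝ be smooth functions, let n ≥ 1 and t ∈ ℝ. Then the n-th derivative of the composition satisfies (d^n/dt^n)(f ∘ g)(t) = Σ_{m=1}^{n} Σ n!/(k_1!·k_2!···k_n!) · f^{(m)}(g(t)) · ∏_{i=1}^{n} (g^{(i)}(t)/i!)^{k_i}, where the inner sum runs over all tuples (k_1,…,k_n) of non-negative integers with k_1 + k_2 + ⋯ + k_n = m and k_1 + 2k_2 + ⋯ + n·k_n = n. -/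
/-!
The set-partition form of the formula writes `(f ∘ g)^(n)(t)` as a sum over the ordered partitions
`c` of `Fin n` of `f^(m)(g t) · ∏_{B ∈ c} g^(|B|)(t)`, where `m` is the number of blocks; this term
depends only on the multiset `M` of block sizes of `c`. The number `N(M)` of partitions with block
sizes `M` satisfies `N(M) · ∏_{s ∈ M} s! · ∏_j (mult_j M)! = n!`, by induction on `n`: deleting `0`
from a partition of `Fin (n + 1)` either removes a singleton block or shrinks a block by one, and
the symmetry factor changes by exactly the matching amount. Grouping the terms by the multiplicity
vector `k` of `M` (`k i` blocks of size `i + 1`) gives the formula.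
-/

open scoped Nat
open Finset

theorem Multiset.cons_eq_iff {α : Type*} [DecidableEq α] {a : α} {s t : Multiset α} :
    a ::ₘ s = t ↔ a ∈ t ∧ s = t.erase a := by
  constructor
  · rintro rfl
    exact ⟨mem_cons_self a s, (erase_cons_head a s).symm⟩
  · rintro ⟨ha, rfl⟩
    exact cons_erase ha

theorem Finset.map_univ_val_update {ι β : Type*} [Fintype ι] [DecidableEq ι] [DecidableEq β]
    (f : ι → β) (i : ι) (b : β) :
    univ.val.map (Function.update f i b) = b ::ₘ (univ.val.map f).erase (f i) := by
  have h_univ : (univ : Finset ι).val = i ::ₘ (univ.erase i).val := by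
    rw [erase_val, Multiset.cons_erase (mem_univ i)]
  rw [h_univ, Multiset.map_cons, Multiset.map_cons, Function.update_self,
    Multiset.erase_cons_head]
  congr 1
  refine Multiset.map_congr rfl fun j hj ↦ ?_
  exact Function.update_of_ne (ne_of_mem_erase hj) _ _

theorem Multiset.count_mul_ite_cons_erase_eq {α : Type*} [DecidableEq α] (a b : α)
    (s t : Multiset α) :
    s.count a * (if b ::ₘ s.erase a = t then 1 else 0) =
      if b ∈ t ∧ s = a ::ₘ t.erase b then (t.erase b).count a + 1 else 0 := by
  by_cases ha : a ∈ s
  · have h_iff : s.erase a = t.erase b ↔ s = a ::ₘ t.erase b := by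
      rw [@eq_comm _ s, cons_eq_iff]
      exact ⟨fun h ↦ ⟨ha, h.symm⟩, fun h ↦ h.2.symm⟩
    simp_rw [cons_eq_iff, h_iff]
    split_ifs with h
    · rw [h.2, count_cons_self, mul_one]
    · rw [mul_zero]
  · rw [count_eq_zero_of_notMem ha, zero_mul, if_neg]
    rintro ⟨-, rfl⟩
    exact ha (mem_cons_self a _)

theorem Multiset.sum_eq_sum_range_count_mul (M : Multiset ℕ) :
    M.sum = ∑ j ∈ Finset.range (M.sum + 1), M.count j * j := by
  conv_lhs => rw [sum_multiset_count_of_subset M (Finset.range (M.sum + 1)) fun j hj ↦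
    Finset.mem_range_succ_iff.mpr (le_sum_of_mem (mem_toFinset.mp hj))]
  simp only [smul_eq_mul]

-- The order of the stabiliser, in the symmetric group, of a set partition with block sizes `M`.
def symmetryFactor (M : Multiset ℕ) : ℕ := ∏ j ∈ M.toFinset, j ! ^ M.count j * (M.count j)!

lemma symmetryFactor_eq_prod_of_subset {M : Multiset ℕ} {s : Finset ℕ} (h : M.toFinset ⊆ s) :
    symmetryFactor M = ∏ j ∈ s, j ! ^ M.count j * (M.count j)! :=
  prod_subset h fun j _ hj ↦ by simp [Multiset.count_eq_zero.mpr (by simpa using hj)]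

@[simp] lemma symmetryFactor_zero : symmetryFactor 0 = 1 := rfl

lemma symmetryFactor_cons (a : ℕ) (M : Multiset ℕ) :
    symmetryFactor (a ::ₘ M) = a ! * (M.count a + 1) * symmetryFactor M := by
  have ha : a ∈ insert a M.toFinset := mem_insert_self a _
  rw [symmetryFactor_eq_prod_of_subset (M := a ::ₘ M) (s := insert a M.toFinset) (by simp),
    symmetryFactor_eq_prod_of_subset (subset_insert a _), ← mul_prod_erase _ _ ha,
    ← mul_prod_erase _ (fun j ↦ j ! ^ M.count j * (M.count j)!) ha,
    prod_congr rfl fun j hj ↦ by rw [Multiset.count_cons_of_ne (ne_of_mem_erase hj)],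
    Multiset.count_cons_self, Nat.factorial_succ, pow_succ]
  ring

lemma symmetryFactor_eq_of_mem {a : ℕ} {M : Multiset ℕ} (ha : a ∈ M) :
    symmetryFactor M = a ! * M.count a * symmetryFactor (M.erase a) := by
  conv_lhs => rw [← Multiset.cons_erase ha]
  rw [symmetryFactor_cons, ← Multiset.count_cons_self, Multiset.cons_erase ha]

lemma symmetryFactor_pos (M : Multiset ℕ) : 0 < symmetryFactor M :=
  prod_pos fun _ _ ↦ by positivity

section multisetOfCounts

variable {n : ℕ}

def multisetOfCounts (k : Fin n → ℕ) : Multiset ℕ := ∑ i, Multiset.replicate (k i) (i.1 + 1)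

lemma count_multisetOfCounts (k : Fin n → ℕ) (i : Fin n) :
    (multisetOfCounts k).count (i.1 + 1) = k i := by
  simp [multisetOfCounts, Multiset.count_sum', Multiset.count_replicate, Fin.val_inj]

lemma mem_multisetOfCounts {k : Fin n → ℕ} {j : ℕ} (hj : j ∈ multisetOfCounts k) :
    1 ≤ j ∧ j ≤ n := by
  obtain ⟨i, -, hi⟩ := Multiset.mem_sum.mp hj
  rw [Multiset.eq_of_mem_replicate hi]
  omega

lemma eq_multisetOfCounts_iff {P : Multiset ℕ} (hP : ∀ j ∈ P, 1 ≤ j ∧ j ≤ n) (k : Fin n → ℕ) :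
    P = multisetOfCounts k ↔ ∀ i : Fin n, P.count (i.1 + 1) = k i := by
  refine ⟨fun h ↦ h ▸ count_multisetOfCounts k, fun h ↦ Multiset.ext.mpr fun j ↦ ?_⟩
  by_cases hj : 1 ≤ j ∧ j ≤ n
  · obtain ⟨i, rfl⟩ : ∃ i : Fin n, i.1 + 1 = j :=
      ⟨⟨j - 1, by omega⟩, by simp only; omega⟩
    rw [h, count_multisetOfCounts]
  · rw [Multiset.count_eq_zero_of_notMem fun h ↦ hj (hP j h),
      Multiset.count_eq_zero_of_notMem fun h ↦ hj (mem_multisetOfCounts h)]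

lemma sum_multisetOfCounts (k : Fin n → ℕ) :
    (multisetOfCounts k).sum = ∑ i : Fin n, (i.1 + 1) * k i := by
  simp [multisetOfCounts, Multiset.sum_sum, mul_comm]

lemma card_multisetOfCounts (k : Fin n → ℕ) :
    Multiset.card (multisetOfCounts k) = ∑ i, k i := by
  simp [multisetOfCounts]

lemma prod_map_multisetOfCounts {M : Type*} [CommMonoid M] (k : Fin n → ℕ) (h : ℕ → M) :
    ((multisetOfCounts k).map h).prod = ∏ i : Fin n, h (i.1 + 1) ^ k i := by
  rw [multisetOfCounts, ← Multiset.coe_mapAddMonoidHom, map_sum, Multiset.prod_sum]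
  simp

lemma symmetryFactor_multisetOfCounts (k : Fin n → ℕ) :
    symmetryFactor (multisetOfCounts k) = ∏ i : Fin n, (i.1 + 1)! ^ k i * (k i)! := by
  have h_sub : (multisetOfCounts k).toFinset ⊆ univ.image fun i : Fin n ↦ i.1 + 1 := by
    intro j hj
    have := mem_multisetOfCounts (Multiset.mem_toFinset.mp hj)
    exact mem_image.mpr ⟨⟨j - 1, by omega⟩, mem_univ _, by simp; omega⟩
  rw [symmetryFactor_eq_prod_of_subset h_sub, prod_image fun i _ j _ h ↦ Fin.ext (by omega)]
  simp only [count_multisetOfCounts]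

end multisetOfCounts

namespace OrderedFinpartition

variable {n : ℕ} (c : OrderedFinpartition n)

def partSizes : Multiset ℕ := univ.val.map c.partSize

@[simp] lemma card_partSizes : Multiset.card c.partSizes = c.length := by simp [partSizes]

lemma sum_partSizes : c.partSizes.sum = n := by
  rw [partSizes, sum_map_val]
  simpa using c.sum_sigma_eq_sum (fun _ ↦ (1 : ℕ))

lemma pos_of_mem_partSizes {s : ℕ} (hs : s ∈ c.partSizes) : 0 < s := by
  obtain ⟨i, -, rfl⟩ := Multiset.mem_map.mp hs
  exact c.partSize_pos i

lemma le_of_mem_partSizes {s : ℕ} (hs : s ∈ c.partSizes) : s ≤ n := by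
  obtain ⟨i, -, rfl⟩ := Multiset.mem_map.mp hs
  exact c.partSize_le i

@[to_additive]
lemma prod_partSize {M : Type*} [CommMonoid M] (h : ℕ → M) :
    ∏ i, h (c.partSize i) = (c.partSizes.map h).prod := by
  rw [partSizes, Multiset.map_map, prod_map_val]
  rfl

lemma partSizes_extendLeft : c.extendLeft.partSizes = 1 ::ₘ c.partSizes := by
  change univ.val.map (Fin.cons 1 c.partSize) = _
  rw [Fin.univ_succ, cons_val, map_val, Multiset.map_cons, Multiset.map_map]
  rfl

lemma partSizes_extendMiddle (i : Fin c.length) :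
    (c.extendMiddle i).partSizes = (c.partSize i + 1) ::ₘ c.partSizes.erase (c.partSize i) :=
  map_univ_val_update _ _ _

lemma sum_partSizes_succ {β : Type*} [AddCommMonoid β] (w : Multiset ℕ → β) :
    ∑ c : OrderedFinpartition (n + 1), w c.partSizes =
      ∑ c : OrderedFinpartition n, (w (1 ::ₘ c.partSizes) +
        ∑ i, w ((c.partSize i + 1) ::ₘ c.partSizes.erase (c.partSize i))) := by
  rw [← (extendEquiv n).sum_comp, Fintype.sum_sigma]
  simp [Fintype.sum_option, partSizes_extendLeft, partSizes_extendMiddle]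

noncomputable def numWithPartSizes (n : ℕ) (M : Multiset ℕ) : ℕ :=
  #{c : OrderedFinpartition n | c.partSizes = M}

lemma numWithPartSizes_zero_zero : numWithPartSizes 0 0 = 1 := by
  have h_all (c : OrderedFinpartition 0) : c.partSizes = 0 := by
    rw [← Multiset.card_eq_zero, card_partSizes]
    exact Nat.le_zero.mp c.length_le
  simp [numWithPartSizes, h_all]

lemma sum_ite_partSizes_eq (X : Multiset ℕ) (k : ℕ) :
    ∑ c : OrderedFinpartition n, (if c.partSizes = X then k else 0) =
      k * numWithPartSizes n X := by
  rw [← sum_filter, sum_const, smul_eq_mul, mul_comm, numWithPartSizes]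

lemma sum_partSize_eq_sum_count {β : Type*} [AddCommMonoid β] (ψ : ℕ → β) :
    ∑ i, ψ (c.partSize i) = ∑ s ∈ range n, c.partSizes.count (s + 1) • ψ (s + 1) := by
  classical
  have h_sub : c.partSizes.toFinset ⊆ range (n + 1) := fun s hs ↦
    mem_range_succ_iff.mpr (c.le_of_mem_partSizes (Multiset.mem_toFinset.mp hs))
  rw [sum_partSize, sum_multiset_map_count, sum_subset h_sub, sum_range_succ',
    Multiset.count_eq_zero_of_notMem fun h ↦ (c.pos_of_mem_partSizes h).ne' rfl, zero_smul,
    add_zero]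
  intro s _ hs
  rw [Multiset.count_eq_zero_of_notMem (by simpa using hs), zero_smul]

-- The factor counts the blocks of size `s + 1` that may have grown into the block of size `s + 2`
-- containing `0`.
lemma numWithPartSizes_succ (M : Multiset ℕ) :
    numWithPartSizes (n + 1) M = (if 1 ∈ M then numWithPartSizes n (M.erase 1) else 0) +
      ∑ s ∈ range n, if s + 2 ∈ M then
        ((M.erase (s + 2)).count (s + 1) + 1) * numWithPartSizes n ((s + 1) ::ₘ M.erase (s + 2))
        else 0 := by
  rw [numWithPartSizes, card_filter, sum_partSizes_succ (fun P ↦ if P = M then 1 else 0),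
    sum_add_distrib]
  congr 1
  · simp_rw [Multiset.cons_eq_iff]
    split_ifs with h1
    · simpa [h1] using sum_ite_partSizes_eq (M.erase 1) 1
    · simp [h1]
  · rw [sum_congr rfl fun c _ ↦ c.sum_partSize_eq_sum_count
      (fun s ↦ if (s + 1) ::ₘ c.partSizes.erase s = M then 1 else 0)]
    simp_rw [smul_eq_mul, Multiset.count_mul_ite_cons_erase_eq]
    rw [sum_comm]
    refine sum_congr rfl fun s _ ↦ ?_
    split_ifs with h
    · simp [h, sum_ite_partSizes_eq]
    · simp [h]

theorem numWithPartSizes_mul_symmetryFactor {M : Multiset ℕ} (hsum : M.sum = n)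
    (h0 : 0 ∉ M) : numWithPartSizes n M * symmetryFactor M = n ! := by
  induction n generalizing M with
  | zero =>
    obtain rfl : M = 0 := Multiset.eq_zero_of_forall_notMem fun x hx ↦
      h0 (Multiset.sum_eq_zero_iff.mp hsum x hx ▸ hx)
    rw [numWithPartSizes_zero_zero, symmetryFactor_zero, Nat.factorial_zero]
  | succ n ih =>
    have h_erase {a : ℕ} (ha : a ∈ M) : (M.erase a).sum + a = n + 1 := by
      rw [← hsum, ← Multiset.sum_erase ha, add_comm]
    have h_one : (if 1 ∈ M then numWithPartSizes n (M.erase 1) else 0) * symmetryFactor M =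
        M.count 1 * 1 * n ! := by
      split_ifs with h1
      · rw [symmetryFactor_eq_of_mem h1, ← ih (M := M.erase 1) (by have := h_erase h1; omega)
          fun h ↦ h0 (Multiset.mem_of_mem_erase h)]
        ring
      · simp [Multiset.count_eq_zero_of_notMem h1]
    have h_grow : ∀ s ∈ range n, (if s + 2 ∈ M then
        ((M.erase (s + 2)).count (s + 1) + 1) * numWithPartSizes n ((s + 1) ::ₘ M.erase (s + 2))
        else 0) * symmetryFactor M = M.count (s + 2) * (s + 2) * n ! := by
      intro s _
      split_ifs with hs
      · have h0' : 0 ∉ (s + 1) ::ₘ M.erase (s + 2) := by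
          simpa [eq_comm] using fun h ↦ h0 (Multiset.mem_of_mem_erase h)
        rw [symmetryFactor_eq_of_mem hs, ← ih (by simp; have := h_erase hs; omega) h0',
          symmetryFactor_cons, Nat.factorial_succ (s + 1)]
        ring
      · simp [Multiset.count_eq_zero_of_notMem hs]
    have h_sum := M.sum_eq_sum_range_count_mul
    rw [hsum, sum_range_succ', sum_range_succ'] at h_sum
    rw [numWithPartSizes_succ, add_mul, sum_mul, h_one, sum_congr rfl h_grow, Nat.factorial_succ,
      h_sum]
    simp only [add_assoc, Nat.reduceAdd, zero_add, mul_zero, add_zero, add_mul, sum_mul]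
    ring

lemma cast_numWithPartSizes {R : Type*} [DivisionSemiring R] [CharZero R] {M : Multiset ℕ}
    (hsum : M.sum = n) (h0 : 0 ∉ M) : (numWithPartSizes n M : R) = n ! / symmetryFactor M := by
  rw [eq_div_iff (by exact_mod_cast (symmetryFactor_pos M).ne'),
    ← numWithPartSizes_mul_symmetryFactor hsum h0, Nat.cast_mul]

lemma partSizes_eq_multisetOfCounts_iff (c : OrderedFinpartition n) (k : Fin n → ℕ) :
    c.partSizes = multisetOfCounts k ↔ (fun i : Fin n ↦ c.partSizes.count (i.1 + 1)) = k :=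
  (eq_multisetOfCounts_iff
    (fun _ hj ↦ ⟨c.pos_of_mem_partSizes hj, c.le_of_mem_partSizes hj⟩) k).trans funext_iff.symm

theorem sum_partSizes_eq_sum_multisetOfCounts {β : Type*} [AddCommMonoid β]
    (w : Multiset ℕ → β) :
    ∑ c : OrderedFinpartition n, w c.partSizes =
      ∑ k ∈ (Fintype.piFinset fun _ : Fin n ↦ range (n + 1)).filter
          (fun k ↦ ∑ i : Fin n, (i.1 + 1) * k i = n),
        numWithPartSizes n (multisetOfCounts k) • w (multisetOfCounts k) := by
  have h_maps (c : OrderedFinpartition n) : (fun i : Fin n ↦ c.partSizes.count (i.1 + 1)) ∈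
      (Fintype.piFinset fun _ : Fin n ↦ range (n + 1)).filter
        (fun k ↦ ∑ i : Fin n, (i.1 + 1) * k i = n) := by
    refine mem_filter.mpr ⟨Fintype.mem_piFinset.mpr fun i ↦ mem_range_succ_iff.mpr ?_, ?_⟩
    · exact (Multiset.count_le_card _ _).trans (c.card_partSizes ▸ c.length_le)
    · rw [← sum_multisetOfCounts, ← (c.partSizes_eq_multisetOfCounts_iff _).mpr rfl,
        c.sum_partSizes]
  rw [← sum_fiberwise_of_maps_to fun c _ ↦ h_maps c]
  refine sum_congr rfl fun k _ ↦ ?_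
  simp_rw [← partSizes_eq_multisetOfCounts_iff]
  rw [sum_congr rfl fun c hc ↦ by rw [(mem_filter.mp hc).2], sum_const, numWithPartSizes]

end OrderedFinpartition

lemma sum_mem_Icc_of_sum_succ_mul_eq {n : ℕ} (hn : 1 ≤ n) {k : Fin n → ℕ}
    (hk : ∑ i : Fin n, (i.1 + 1) * k i = n) : ∑ i, k i ∈ Icc 1 n := by
  refine mem_Icc.mpr ⟨Nat.one_le_iff_ne_zero.mpr fun h ↦ ?_, ?_⟩
  · simp [sum_eq_zero_iff.mp h] at hk
    omega
  · exact (sum_le_sum fun i _ ↦ Nat.le_mul_of_pos_left (k i) i.1.succ_pos).trans hk.le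

/-- **Faà di Bruno's formula.** For smooth `f g : ℝ → ℝ`, `n ≥ 1` and `t : ℝ`,
the `n`-th derivative of `f ∘ g` at `t` is
`∑_{m=1}^{n} ∑ n!/(k₁!⋯kₙ!) f^{(m)}(g(t)) ∏ᵢ (g^{(i)}(t)/i!)^{kᵢ}`,
where the inner sum runs over tuples `(k₁,…,kₙ)` of non-negative integers with
`k₁+⋯+kₙ = m` and `k₁+2k₂+⋯+n·kₙ = n` (all such tuples satisfy `kᵢ ≤ n`,
so they all lie in the finite box used below). Here `k i` stands for `k_{i+1}`. -/
theorem faa_di_bruno_formula (f g : ℝ → ℝ)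
    (hf : ContDiff ℝ ((⊤ : ℕ∞) : WithTop ℕ∞) f)
    (hg : ContDiff ℝ ((⊤ : ℕ∞) : WithTop ℕ∞) g)
    (n : ℕ) (hn : 1 ≤ n) (t : ℝ) :
    iteratedDeriv n (f ∘ g) t =
      ∑ m ∈ Finset.Icc 1 n,
        ∑ k ∈ (Fintype.piFinset fun _ : Fin n => Finset.range (n + 1)).filter
            (fun k : Fin n → ℕ =>
              (∑ i, k i) = m ∧ (∑ i, (i.1 + 1) * k i) = n),
          ((n ! : ℝ) / ∏ i : Fin n, ((k i)! : ℝ)) * iteratedDeriv m f (g t) *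
            ∏ i : Fin n,
              (iteratedDeriv (i.1 + 1) g t / ((i.1 + 1)! : ℝ)) ^ (k i) := by
  let w (P : Multiset ℕ) : ℝ :=
    iteratedDeriv (Multiset.card P) f (g t) * (P.map fun s ↦ iteratedDeriv s g t).prod
  have h_term (c : OrderedFinpartition n) :
      iteratedDeriv c.length f (g t) * ∏ j, iteratedDeriv (c.partSize j) g t = w c.partSizes := by
    rw [c.prod_partSize fun s ↦ iteratedDeriv s g t, ← c.card_partSizes]
  rw [iteratedDeriv_comp_eq_sum_orderedFinpartition hf.contDiffAt hg.contDiffAt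
    (by exact_mod_cast le_top)]
  simp_rw [h_term]
  rw [OrderedFinpartition.sum_partSizes_eq_sum_multisetOfCounts w,
    ← sum_fiberwise_of_maps_to (g := fun k ↦ ∑ i, k i) (t := Icc 1 n)
      fun k hk ↦ sum_mem_Icc_of_sum_succ_mul_eq hn (k := k) (mem_filter.mp hk).2]
  refine sum_congr rfl fun m _ ↦ ?_
  rw [filter_filter]
  refine sum_congr (filter_congr fun _ _ ↦ and_comm) fun k hk ↦ ?_
  obtain ⟨-, hkm, hkn⟩ := mem_filter.mp hk
  simp only [w]
  rw [nsmul_eq_mul, OrderedFinpartition.cast_numWithPartSizes (by rw [sum_multisetOfCounts, hkn])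
    fun h ↦ (mem_multisetOfCounts h).1.not_gt Nat.one_pos, symmetryFactor_multisetOfCounts,
    card_multisetOfCounts, hkm, prod_map_multisetOfCounts]
  push_cast
  simp_rw [div_pow, prod_div_distrib, prod_mul_distrib]
  field_simp
end

section
/- Let f, g : ℝ → ℝ be smooth functions, let n ≥ 1 and t ∈ ℝ. Then (d^n/dt^n)(f ∘ g)(t) = Σ_{π} f^{(|π|)}(g(t)) · ∏_{B ∈ π} g^{(|B|)}(t), where the sum runs over all set partitions π of the set {1, …, n} (equivalently, all Finpartitions of the full finset of Fin n), |π| is the number of blocks of π, and |B| is the cardinality of the block B. -/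
/-!
Mathlib's Faà di Bruno formula `iteratedDeriv_comp_eq_sum_orderedFinpartition` sums over
`OrderedFinpartition n`, i.e. set partitions of `Fin n` whose blocks are listed by increasing
maximum. Every set partition admits exactly one such listing, so forgetting the order is a
bijection onto `Finpartition univ`, preserving the number of blocks and their sizes. The listing
is obtained by sorting the blocks in colex order, which compares disjoint sets by their maxima.
-/

open Finset

namespace Finset

variable {α : Type*} [LinearOrder α] {s t : Finset α}

theorem toColex_lt_toColex_of_max'_lt (hs : s.Nonempty) (ht : t.Nonempty)
    (h : s.max' hs < t.max' ht) : toColex s < toColex t :=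
  Colex.toColex_lt_toColex_iff_exists_forall_lt.2
    ⟨t.max' ht, max'_mem t ht, fun hmem => (le_max' s _ hmem).not_gt h,
      fun b hb _ => (le_max' s b hb).trans_lt h⟩

theorem max'_lt_max'_of_toColex_lt (hst : Disjoint s t) (hs : s.Nonempty) (ht : t.Nonempty)
    (h : toColex s < toColex t) : s.max' hs < t.max' ht := by
  rcases lt_trichotomy (s.max' hs) (t.max' ht) with hlt | heq | hgt
  · exact hlt
  · exact absurd (max'_mem t ht) (disjoint_left.1 hst (heq ▸ max'_mem s hs))
  · exact absurd h (toColex_lt_toColex_of_max'_lt ht hs hgt).not_gt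

end Finset

namespace OrderedFinpartition

variable {n : ℕ} (c : OrderedFinpartition n)

def part (m : Fin c.length) : Finset (Fin n) :=
  univ.map ⟨c.emb m, (c.emb_strictMono m).injective⟩

theorem coe_part (m : Fin c.length) : (c.part m : Set (Fin n)) = Set.range (c.emb m) := by
  simp [part]

theorem mem_part {m : Fin c.length} {x : Fin n} :
    x ∈ c.part m ↔ x ∈ Set.range (c.emb m) := by
  rw [← mem_coe, coe_part]

theorem eq_of_mem_part {a b : Fin c.length} {x : Fin n} (ha : x ∈ c.part a) (hb : x ∈ c.part b) :
    a = b := by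
  by_contra hne
  exact Set.disjoint_left.1 (c.disjoint (Set.mem_univ a) (Set.mem_univ b) hne)
    (c.mem_part.1 ha) (c.mem_part.1 hb)

theorem card_part (m : Fin c.length) : #(c.part m) = c.partSize m := by
  simp [part]

theorem part_nonempty (m : Fin c.length) : (c.part m).Nonempty :=
  card_pos.1 ((c.card_part m).symm ▸ c.partSize_pos m)

theorem max'_part (m : Fin c.length) :
    (c.part m).max' (c.part_nonempty m) =
      c.emb m ⟨c.partSize m - 1, Nat.sub_one_lt_of_lt (c.partSize_pos m)⟩ := by
  refine le_antisymm (max'_le _ _ _ fun x hx => ?_) (le_max' _ _ (by simp [part]))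
  obtain ⟨i, -, rfl⟩ := mem_map.1 hx
  exact (c.emb_strictMono m).monotone (Fin.mk_le_mk.2 (Nat.le_sub_one_of_lt i.2))

theorem strictMono_toColex_part : StrictMono fun m => toColex (c.part m) := fun a b hab =>
  toColex_lt_toColex_of_max'_lt (c.part_nonempty a) (c.part_nonempty b)
    (by simpa only [max'_part] using c.parts_strictMono hab)

theorem part_injective : Function.Injective c.part := fun _ _ h =>
  c.strictMono_toColex_part.injective (congrArg toColex h)

theorem ext_of_part {c c' : OrderedFinpartition n} (h : c.length = c'.length)
    (hpart : ∀ m, c.part m = c'.part (Fin.cast h m)) : c = c' := by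
  cases c with | mk l size _ emb emb_mono _ _ _
  cases c' with | mk l' size' _ emb' emb_mono' _ _ _
  obtain rfl : l = l' := h
  obtain rfl : size = size' := funext fun m => by
    simpa only [card_part, Fin.cast_eq_self] using congrArg card (hpart m)
  obtain rfl : emb = emb' := funext fun m => ((emb_mono m).range_inj (emb_mono' m)).1 <| by
    simpa only [coe_part, Fin.cast_eq_self] using congrArg SetLike.coe (hpart m)
  rfl

def toFinpartition : Finpartition (univ : Finset (Fin n)) :=
  .ofExistsUnique (univ.image c.part) (fun _ _ => subset_univ _)
    (fun x _ => by
      obtain ⟨m, hm⟩ := c.cover x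
      refine ⟨c.part m, ⟨mem_image_of_mem _ (mem_univ m), c.mem_part.2 hm⟩, ?_⟩
      rintro _ ⟨hB, hx⟩
      obtain ⟨m', -, rfl⟩ := mem_image.1 hB
      rw [c.eq_of_mem_part hx (c.mem_part.2 hm)])
    (by
      simp only [mem_image, mem_univ, true_and, not_exists]
      exact fun m h => (c.part_nonempty m).ne_empty h)

theorem toFinpartition_parts : c.toFinpartition.parts = univ.image c.part := rfl

theorem card_toFinpartition_parts : #c.toFinpartition.parts = c.length := by
  rw [toFinpartition_parts, card_image_of_injective _ c.part_injective, card_univ, Fintype.card_fin]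

theorem prod_toFinpartition_parts {M : Type*} [CommMonoid M] (F : Finset (Fin n) → M) :
    ∏ B ∈ c.toFinpartition.parts, F B = ∏ m, F (c.part m) := by
  rw [toFinpartition_parts, prod_image fun a _ b _ h => c.part_injective h]

end OrderedFinpartition

namespace Finpartition

variable {n : ℕ} (P : Finpartition (univ : Finset (Fin n)))

def sortedParts : Fin #P.parts ↪o Colex (Finset (Fin n)) :=
  (P.parts.map toColex.toEmbedding).orderEmbOfFin (card_map _)

theorem exists_sortedParts_eq_iff {B : Finset (Fin n)} :
    (∃ m, ofColex (P.sortedParts m) = B) ↔ B ∈ P.parts := by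
  have h := Set.ext_iff.1
    (range_orderEmbOfFin (P.parts.map toColex.toEmbedding) (card_map _)) (toColex B)
  rw [Set.mem_range, mem_coe, mem_map_equiv] at h
  simpa only [sortedParts, ← Equiv.eq_symm_apply, ofColex_symm_eq, Equiv.symm_apply_apply]
    using h

theorem image_sortedParts : univ.image (fun m => ofColex (P.sortedParts m)) = P.parts := by
  ext B
  simp [exists_sortedParts_eq_iff]

theorem sortedParts_mem (m : Fin #P.parts) : ofColex (P.sortedParts m) ∈ P.parts :=
  P.exists_sortedParts_eq_iff.1 ⟨m, rfl⟩

theorem ofColex_sortedParts_injective : Function.Injective fun m => ofColex (P.sortedParts m) :=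
  ofColex.injective.comp P.sortedParts.injective

def toOrderedFinpartition : OrderedFinpartition n where
  length := #P.parts
  partSize m := #(ofColex (P.sortedParts m))
  partSize_pos m := card_pos.2 (P.nonempty_of_mem_parts (P.sortedParts_mem m))
  emb m := (ofColex (P.sortedParts m)).orderEmbOfFin rfl
  emb_strictMono m := OrderEmbedding.strictMono _
  parts_strictMono a b hab := by
    have hpos m := card_pos.2 (P.nonempty_of_mem_parts (P.sortedParts_mem m))
    dsimp only
    rw [orderEmbOfFin_last rfl (hpos a), orderEmbOfFin_last rfl (hpos b)]
    exact max'_lt_max'_of_toColex_lt (P.disjoint (P.sortedParts_mem a) (P.sortedParts_mem b)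
      (P.ofColex_sortedParts_injective.ne hab.ne)) _ _ (P.sortedParts.strictMono hab)
  disjoint a _ b _ hab := by
    simp only [Function.onFun, range_orderEmbOfFin, disjoint_coe]
    exact P.disjoint (P.sortedParts_mem a) (P.sortedParts_mem b)
      (P.ofColex_sortedParts_injective.ne hab)
  cover x := by
    obtain ⟨m, hm⟩ := P.exists_sortedParts_eq_iff.2 (P.part_mem.2 (mem_univ x))
    refine ⟨m, ?_⟩
    rw [range_orderEmbOfFin, hm, mem_coe]
    exact P.mem_part (mem_univ x)

theorem part_toOrderedFinpartition (m : Fin P.toOrderedFinpartition.length) :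
    P.toOrderedFinpartition.part m = ofColex (P.sortedParts m) := by
  rw [← coe_inj, OrderedFinpartition.coe_part]
  exact range_orderEmbOfFin _ _

theorem toFinpartition_toOrderedFinpartition : P.toOrderedFinpartition.toFinpartition = P := by
  ext1
  rw [OrderedFinpartition.toFinpartition_parts, ← P.image_sortedParts]
  exact image_congr fun m _ => P.part_toOrderedFinpartition m

end Finpartition

namespace OrderedFinpartition

variable {n : ℕ} (c : OrderedFinpartition n)

theorem sortedParts_toFinpartition (m : Fin #c.toFinpartition.parts) :
    c.toFinpartition.sortedParts m = toColex (c.part (Fin.cast c.card_toFinpartition_parts m)) := by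
  refine (congrFun (orderEmbOfFin_unique _
    (f := fun i => toColex (c.part (Fin.cast c.card_toFinpartition_parts i)))
    (fun i => ?_) fun _ _ h => c.strictMono_toColex_part h) m).symm
  simp [toFinpartition_parts]

theorem toOrderedFinpartition_toFinpartition : c.toFinpartition.toOrderedFinpartition = c :=
  ext_of_part c.card_toFinpartition_parts fun m =>
    (c.toFinpartition.part_toOrderedFinpartition m).trans
      (congrArg ofColex (c.sortedParts_toFinpartition m))

def equivFinpartition : OrderedFinpartition n ≃ Finpartition (univ : Finset (Fin n)) where
  toFun := toFinpartition
  invFun := Finpartition.toOrderedFinpartition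
  left_inv := toOrderedFinpartition_toFinpartition
  right_inv := Finpartition.toFinpartition_toOrderedFinpartition

end OrderedFinpartition

theorem faa_di_bruno_partitions_general (f g : ℝ → ℝ)
    (hf : ContDiff ℝ ((⊤ : ℕ∞) : WithTop ℕ∞) f)
    (hg : ContDiff ℝ ((⊤ : ℕ∞) : WithTop ℕ∞) g)
    (n : ℕ) (t : ℝ) :
    iteratedDeriv n (f ∘ g) t =
      ∑ π : Finpartition (Finset.univ : Finset (Fin n)),
        iteratedDeriv π.parts.card f (g t) *
          ∏ B ∈ π.parts, iteratedDeriv B.card g t := by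
  rw [iteratedDeriv_comp_eq_sum_orderedFinpartition hf.contDiffAt hg.contDiffAt
    (WithTop.coe_le_coe.2 le_top)]
  refine Fintype.sum_equiv OrderedFinpartition.equivFinpartition _ _ fun c => ?_
  simp only [OrderedFinpartition.equivFinpartition, Equiv.coe_fn_mk,
    c.card_toFinpartition_parts, c.prod_toFinpartition_parts, c.card_part]

/-- **Faà di Bruno's formula, set-partition form (Frucht–Rota).**
For smooth `f g : ℝ → ℝ`, `n ≥ 1` and `t : ℝ`,
`(f ∘ g)^{(n)}(t) = ∑_{π} f^{(|π|)}(g(t)) · ∏_{B ∈ π} g^{(|B|)}(t)`,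
the sum running over all set partitions `π` of `{1,…,n}`, i.e. all
`Finpartition`s of the full finset of `Fin n`. -/
theorem faa_di_bruno_partitions (f g : ℝ → ℝ)
    (hf : ContDiff ℝ ((⊤ : ℕ∞) : WithTop ℕ∞) f)
    (hg : ContDiff ℝ ((⊤ : ℕ∞) : WithTop ℕ∞) g)
    (n : ℕ) (hn : 1 ≤ n) (t : ℝ) :
    iteratedDeriv n (f ∘ g) t =
      ∑ π : Finpartition (Finset.univ : Finset (Fin n)),
        iteratedDeriv π.parts.card f (g t) *
          ∏ B ∈ π.parts, iteratedDeriv B.card g t :=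
  faa_di_bruno_partitions_general f g hf hg n t
end

section
/- Let f, g : ℝ → ℝ be smooth and t₀ ∈ ℝ. In the ring ℝ⟦y⟧ of formal power series, let h := Σ_{k≥1} (g^{(k)}(t₀)/k!) y^k (a power series with zero constant term). Then Σ_{n≥0} ((f∘g)^{(n)}(t₀)/n!) y^n = Σ_{m≥0} (f^{(m)}(g(t₀))/m!) · h^m, where the right-hand side is a well-defined formal power series since h^m has order at least m. -/
/-!
Write `J u` for the Taylor series of `u` (at `t₀`, and at `g t₀` for `f`) and `H = J g - g t₀`.
Formal differentiation turns `J u` into `J u'`, `J` is multiplicative (Leibniz rule) and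
substitution obeys the chain rule, so differentiating both sides of `J (f ∘ g) = (J f).subst H`
gives the same identity for `f'` multiplied by `J g'`. Both sides also have constant term
`f (g t₀)`, so induction on `N` shows that `y ^ N` divides their difference for every `N`,
simultaneously for all smooth `f`.
-/

open scoped Nat ContDiff
open PowerSeries

namespace PowerSeries

variable {R : Type*}

theorem eq_zero_of_forall_X_pow_dvd [Semiring R] {p : R⟦X⟧} (h : ∀ n, X ^ n ∣ p) : p = 0 := by
  ext n
  exact X_pow_dvd_iff.mp (h (n + 1)) n n.lt_succ_self

theorem X_pow_succ_dvd_of_X_pow_dvd_derivative [CommSemiring R] [IsAddTorsionFree R]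
    {p : R⟦X⟧} {n : ℕ} (h₀ : constantCoeff p = 0) (h : X ^ n ∣ d⁄dX R p) : X ^ (n + 1) ∣ p := by
  rw [X_pow_dvd_iff] at h ⊢
  rintro (_ | m) hm
  · rwa [coeff_zero_eq_constantCoeff_apply]
  · have := h m (by omega)
    rw [coeff_derivative, mul_comm, ← Nat.cast_succ, ← nsmul_eq_mul] at this
    exact nsmul_right_injective m.succ_ne_zero (this.trans (smul_zero _).symm)

theorem constantCoeff_subst_of_constantCoeff_eq_zero [CommRing R] {a f : R⟦X⟧}
    (ha : constantCoeff a = 0) :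
    constantCoeff (f.subst a) = constantCoeff f := by
  rw [← coeff_zero_eq_constantCoeff_apply, coeff_subst' (.of_constantCoeff_zero' ha),
    finsum_eq_single _ 0]
  · simp
  · intro d hd
    rw [coeff_zero_eq_constantCoeff_apply, map_pow, ha, zero_pow hd, smul_zero]

theorem coeff_subst_eq_tsum [CommRing R] [TopologicalSpace R] {a : R⟦X⟧} (ha : HasSubst a)
    (f : R⟦X⟧) (n : ℕ) :
    coeff n (f.subst a) = ∑' d, coeff d f * coeff n (a ^ d) := by
  rw [coeff_subst' ha, ← tsum_eq_finsum (L := .unconditional ℕ) (coeff_subst_finite' ha f n)]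
  rfl

end PowerSeries

section TaylorSeries

variable {𝕜 : Type*} [NontriviallyNormedField 𝕜]

noncomputable def taylorSeries (u : 𝕜 → 𝕜) (t : 𝕜) : 𝕜⟦X⟧ :=
  mk fun n => iteratedDeriv n u t / n !

@[simp]
theorem coeff_taylorSeries (u : 𝕜 → 𝕜) (t : 𝕜) (n : ℕ) :
    coeff n (taylorSeries u t) = iteratedDeriv n u t / n ! :=
  coeff_mk _ _

@[simp]
theorem constantCoeff_taylorSeries (u : 𝕜 → 𝕜) (t : 𝕜) :
    constantCoeff (taylorSeries u t) = u t := by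
  simp [← coeff_zero_eq_constantCoeff_apply]

theorem taylorSeries_sub_C (u : 𝕜 → 𝕜) (t : 𝕜) :
    taylorSeries u t - C (u t) = mk fun k => if k = 0 then 0 else iteratedDeriv k u t / k ! := by
  ext (_ | k) <;> simp

variable [CharZero 𝕜]

theorem derivative_taylorSeries (u : 𝕜 → 𝕜) (t : 𝕜) :
    d⁄dX 𝕜 (taylorSeries u t) = taylorSeries (deriv u) t := by
  ext n
  rw [coeff_derivative, coeff_taylorSeries, coeff_taylorSeries, iteratedDeriv_succ',
    Nat.factorial_succ, Nat.cast_mul]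
  field_simp
  push_cast
  ring

theorem taylorSeries_mul {u v : 𝕜 → 𝕜} {t : 𝕜} (hu : ContDiffAt 𝕜 ∞ u t)
    (hv : ContDiffAt 𝕜 ∞ v t) :
    taylorSeries (u * v) t = taylorSeries u t * taylorSeries v t := by
  ext n
  rw [coeff_mul, Finset.Nat.sum_antidiagonal_eq_sum_range_succ_mk, coeff_taylorSeries,
    iteratedDeriv_mul (hu.of_le (mod_cast le_top)) (hv.of_le (mod_cast le_top)), Finset.sum_div]
  refine Finset.sum_congr rfl fun i hi => ?_
  have hin : i ≤ n := Nat.lt_succ_iff.mp (Finset.mem_range.mp hi)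
  rw [coeff_taylorSeries, coeff_taylorSeries, Nat.cast_choose 𝕜 hin]
  have : (n ! : 𝕜) ≠ 0 := Nat.cast_ne_zero.mpr n.factorial_ne_zero
  field_simp

theorem taylorSeries_comp {f g : 𝕜 → 𝕜} (hf : ContDiff 𝕜 ∞ f) (hg : ContDiff 𝕜 ∞ g) (t : 𝕜) :
    taylorSeries (f ∘ g) t = (taylorSeries f (g t)).subst (taylorSeries g t - C (g t)) := by
  set H := taylorSeries g t - C (g t)
  have hH₀ : constantCoeff H = 0 := by simp [H]
  have hH : HasSubst H := .of_constantCoeff_zero' hH₀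
  have hH' : d⁄dX 𝕜 H = taylorSeries (deriv g) t := by
    simp [H, derivative_taylorSeries]
  suffices ∀ N f, ContDiff 𝕜 ∞ f →
      X ^ N ∣ taylorSeries (f ∘ g) t - (taylorSeries f (g t)).subst H from
    sub_eq_zero.mp (eq_zero_of_forall_X_pow_dvd fun N => this N f hf)
  intro N
  induction N with
  | zero => simp
  | succ N ih =>
    intro f hf
    have hderiv : deriv (f ∘ g) = (deriv f ∘ g) * deriv g := by
      ext s
      exact deriv_comp s (hf.differentiable (by simp) _) (hg.differentiable (by simp) _)
    have hf' := (contDiff_infty_iff_deriv.mp hf).2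
    have hg' := (contDiff_infty_iff_deriv.mp hg).2
    refine X_pow_succ_dvd_of_X_pow_dvd_derivative ?_ ?_
    · rw [map_sub, constantCoeff_subst_of_constantCoeff_eq_zero hH₀]
      simp
    · rw [map_sub, derivative_taylorSeries, hderiv,
        taylorSeries_mul (hf'.comp hg).contDiffAt hg'.contDiffAt, derivative_subst hH, hH',
        derivative_taylorSeries, ← sub_mul]
      exact (ih _ hf').mul_right _

end TaylorSeries

/-- **Faà di Bruno's formula as an identity of formal power series.**
For smooth `f g : ℝ → ℝ` and `t₀ : ℝ`, with
`h := ∑_{k ≥ 1} (g^{(k)}(t₀)/k!) yᵏ ∈ ℝ⟦y⟧` we have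
`∑_{n ≥ 0} ((f∘g)^{(n)}(t₀)/n!) yⁿ = ∑_{m ≥ 0} (f^{(m)}(g(t₀))/m!) hᵐ`,
the right-hand side being summed coefficientwise (for each fixed coefficient
the `tsum` below has only finitely many nonzero terms, since `hᵐ` has order
at least `m`). -/
theorem faa_di_bruno_formal_power_series (f g : ℝ → ℝ)
    (hf : ContDiff ℝ ((⊤ : ℕ∞) : WithTop ℕ∞) f)
    (hg : ContDiff ℝ ((⊤ : ℕ∞) : WithTop ℕ∞) g) (t₀ : ℝ) :
    (PowerSeries.mk fun n : ℕ => iteratedDeriv n (f ∘ g) t₀ / n !) =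
      PowerSeries.mk fun N : ℕ =>
        ∑' m : ℕ, (iteratedDeriv m f (g t₀) / m !) *
          PowerSeries.coeff (R := ℝ) N
            ((PowerSeries.mk fun k : ℕ =>
              if k = 0 then (0 : ℝ) else iteratedDeriv k g t₀ / k !) ^ m) := by
  rw [← taylorSeries_sub_C]
  change taylorSeries (f ∘ g) t₀ = _
  ext N
  rw [taylorSeries_comp hf hg, coeff_subst_eq_tsum (.of_constantCoeff_zero' (by simp)),
    coeff_mk]
  simp
end

section
/- For a smooth function f : ℝ → ℝ define its Taylor extension F_f : ℝ⟦y⟧ → ℝ⟦y⟧ by F_f(T) := Σ_{n≥0} (f^{(n)}(T₀)/n!) · (T − T₀)^n, where T₀ ∈ ℝ is the constant coefficient of T (the sum is well defined since T − T₀ has zero constant term). Then for all smooth f, g : ℝ → ℝ and all T ∈ ℝ⟦y⟧, one has F_{f∘g}(T) = F_f(F_g(T)). -/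
open scoped Nat

/-- The Taylor extension `F_f : ℝ⟦y⟧ → ℝ⟦y⟧` of a function `f : ℝ → ℝ`:
`F_f(T) := ∑_{n ≥ 0} (f^{(n)}(T₀)/n!) (T − T₀)ⁿ` where `T₀` is the constant
coefficient of `T`. The series is summed coefficientwise: for each fixed
coefficient the `tsum` below has only finitely many nonzero terms, since
`(T − T₀)ⁿ` has zero constant coefficient and hence order at least `n`. -/
noncomputable def taylorExt (f : ℝ → ℝ) (T : PowerSeries ℝ) : PowerSeries ℝ :=
  PowerSeries.mk fun N : ℕ =>
    ∑' n : ℕ, (iteratedDeriv n f (PowerSeries.constantCoeff T) / n !) *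
      PowerSeries.coeff N
        ((T - PowerSeries.C (PowerSeries.constantCoeff T)) ^ n)

/-!
The `N`-th coefficient of `taylorExt f T` depends only on the `N`-jet of `f` at `T₀` and on the
coefficients of `T` up to order `N`, and by Faà di Bruno the `N`-jet of `f ∘ g` is determined by
the `N`-jets of `f` and `g`. So `f` and `g` may be replaced by their Taylor polynomials of degree
`N`. For a polynomial `p`, re-expanding `p` around `T₀` shows that `taylorExt p` is just
evaluation `T ↦ p(T)`, which is compatible with composition.
-/

namespace PowerSeries

variable {R : Type*} [CommRing R]

theorem coeff_pow_eq_zero_of_constantCoeff_eq_zero {S : R⟦X⟧} (hS : constantCoeff S = 0)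
    {N n : ℕ} (h : N < n) : coeff N (S ^ n) = 0 :=
  coeff_of_lt_order N <|
    (Nat.cast_lt.mpr h).trans_le (le_order_pow_of_constantCoeff_eq_zero n hS)

theorem coeff_aeval_eq_sum_of_constantCoeff_eq_zero (p : Polynomial R) {S : R⟦X⟧}
    (hS : constantCoeff S = 0) (N : ℕ) :
    coeff N (Polynomial.aeval S p) =
      ∑ n ∈ Finset.range (N + 1), p.coeff n * coeff N (S ^ n) := by
  have hdeg : p.natDegree < max p.natDegree N + 1 := by omega
  rw [Polynomial.aeval_eq_sum_range' hdeg, map_sum]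
  simp only [smul_eq_C_mul, coeff_C_mul]
  refine (Finset.sum_subset (Finset.range_subset_range.mpr (by omega)) fun n _ hn => ?_).symm
  rw [coeff_pow_eq_zero_of_constantCoeff_eq_zero hS (by simpa using hn), mul_zero]

theorem coeff_pow_eq_of_coeff_eq {A B : R⟦X⟧} {N : ℕ} (h : ∀ M ≤ N, coeff M A = coeff M B)
    (n : ℕ) : coeff N (A ^ n) = coeff N (B ^ n) := by
  have hdvd : X ^ (N + 1) ∣ A ^ n - B ^ n :=
    (X_pow_dvd_iff.mpr fun M hM => by rw [map_sub, h M (by omega), sub_self]).trans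
      (sub_dvd_pow_sub_pow A B n)
  simpa [sub_eq_zero] using X_pow_dvd_iff.mp hdvd N N.lt_succ_self

end PowerSeries

namespace Polynomial

variable {𝕜 : Type*} [NontriviallyNormedField 𝕜]

theorem contDiff_eval (p : 𝕜[X]) (n : WithTop ℕ∞) : ContDiff 𝕜 n fun x => p.eval x := by
  simpa using contDiff_aeval (𝕜 := 𝕜) p n

theorem iteratedDeriv_eval (p : 𝕜[X]) (n : ℕ) :
    iteratedDeriv n (fun x => p.eval x) = fun x => (derivative^[n] p).eval x := by
  rw [iteratedDeriv_eq_iterate]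
  induction n generalizing p with
  | zero => rfl
  | succ n ih =>
    have hderiv : deriv (fun x => p.eval x) = fun x => (derivative p).eval x :=
      _root_.funext fun _ => p.deriv
    rw [Function.iterate_succ_apply, Function.iterate_succ_apply, hderiv, ih]

theorem taylor_coeff_eq_iteratedDeriv_div [CharZero 𝕜] (p : 𝕜[X]) (c : 𝕜) (n : ℕ) :
    (taylor c p).coeff n = iteratedDeriv n (fun x => p.eval x) c / n ! := by
  rw [iteratedDeriv_eval, taylor_coeff, ← factorial_smul_hasseDeriv, LinearMap.smul_apply]
  beta_reduce
  rw [eval_smul, nsmul_eq_mul, mul_div_cancel_left₀ _ (by exact_mod_cast n.factorial_ne_zero)]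

end Polynomial

section TaylorPolynomial

open Polynomial

variable {𝕜 : Type*} [NontriviallyNormedField 𝕜]

noncomputable def taylorPoly (f : 𝕜 → 𝕜) (a : 𝕜) (N : ℕ) : 𝕜[X] :=
  ∑ k ∈ Finset.range (N + 1), C (iteratedDeriv k f a / k !) * (X - C a) ^ k

theorem taylor_taylorPoly (f : 𝕜 → 𝕜) (a : 𝕜) (N : ℕ) :
    taylor a (taylorPoly f a N) =
      ∑ k ∈ Finset.range (N + 1), C (iteratedDeriv k f a / k !) * X ^ k := by
  simp only [taylorPoly, map_sum, taylor_mul, taylor_C, taylor_pow, map_sub, taylor_X,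
    add_sub_cancel_right]

theorem iteratedDeriv_eval_taylorPoly [CharZero 𝕜] (f : 𝕜 → 𝕜) (a : 𝕜) {N m : ℕ}
    (hm : m ≤ N) :
    iteratedDeriv m (fun x => (taylorPoly f a N).eval x) a = iteratedDeriv m f a := by
  have hcoeff := taylor_coeff_eq_iteratedDeriv_div (taylorPoly f a N) a m
  rw [taylor_taylorPoly, finsetSum_coeff] at hcoeff
  simp only [coeff_C_mul, coeff_X_pow, mul_ite, mul_one, mul_zero, Finset.sum_ite_eq,
    Finset.mem_range, Order.lt_add_one_iff, if_pos hm] at hcoeff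
  exact (div_left_inj' (by exact_mod_cast m.factorial_ne_zero)).mp hcoeff.symm

end TaylorPolynomial

theorem iteratedDeriv_comp_eq_of_iteratedDeriv_eq {𝕜 : Type*} [NontriviallyNormedField 𝕜]
    {f₁ g₁ f₂ g₂ : 𝕜 → 𝕜} {x : 𝕜} {n : WithTop ℕ∞} {N : ℕ} (hN : N ≤ n)
    (hf₁ : ContDiffAt 𝕜 n f₁ (g₁ x)) (hg₁ : ContDiffAt 𝕜 n g₁ x)
    (hf₂ : ContDiffAt 𝕜 n f₂ (g₂ x)) (hg₂ : ContDiffAt 𝕜 n g₂ x) (hgx : g₁ x = g₂ x)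
    (hf : ∀ k ≤ N, iteratedDeriv k f₁ (g₁ x) = iteratedDeriv k f₂ (g₁ x))
    (hg : ∀ k ≤ N, iteratedDeriv k g₁ x = iteratedDeriv k g₂ x) :
    iteratedDeriv N (f₁ ∘ g₁) x = iteratedDeriv N (f₂ ∘ g₂) x := by
  rw [iteratedDeriv_comp_eq_sum_orderedFinpartition hf₁ hg₁ hN,
    iteratedDeriv_comp_eq_sum_orderedFinpartition hf₂ hg₂ hN, ← hgx]
  refine Finset.sum_congr rfl fun c _ => ?_
  rw [hf c.length c.length_le]
  congr 1
  exact Finset.prod_congr rfl fun i _ => hg _ (c.partSize_le i)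

open PowerSeries

theorem coeff_taylorExt (f : ℝ → ℝ) (T : ℝ⟦X⟧) (N : ℕ) :
    coeff N (taylorExt f T) =
      ∑ n ∈ Finset.range (N + 1), iteratedDeriv n f (constantCoeff T) / n ! *
        coeff N ((T - C (constantCoeff T)) ^ n) := by
  rw [taylorExt, coeff_mk]
  refine tsum_eq_sum fun n hn => ?_
  rw [coeff_pow_eq_zero_of_constantCoeff_eq_zero (by simp) (by simpa using hn), mul_zero]

theorem constantCoeff_taylorExt (f : ℝ → ℝ) (T : ℝ⟦X⟧) :
    constantCoeff (taylorExt f T) = f (constantCoeff T) := by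
  rw [← coeff_zero_eq_constantCoeff_apply, coeff_taylorExt]
  simp

theorem coeff_taylorExt_eq_of_iteratedDeriv_eq {f₁ f₂ : ℝ → ℝ} (T : ℝ⟦X⟧) {N : ℕ}
    (h : ∀ k ≤ N,
      iteratedDeriv k f₁ (constantCoeff T) = iteratedDeriv k f₂ (constantCoeff T)) :
    coeff N (taylorExt f₁ T) = coeff N (taylorExt f₂ T) := by
  simp only [coeff_taylorExt]
  exact Finset.sum_congr rfl fun n hn => by rw [h n (by simpa [Nat.lt_succ_iff] using hn)]

theorem coeff_taylorExt_eq_of_coeff_eq (f : ℝ → ℝ) {T₁ T₂ : ℝ⟦X⟧} {N : ℕ}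
    (h : ∀ M ≤ N, coeff M T₁ = coeff M T₂) :
    coeff N (taylorExt f T₁) = coeff N (taylorExt f T₂) := by
  have h₀ : constantCoeff T₁ = constantCoeff T₂ := by
    simpa [coeff_zero_eq_constantCoeff_apply] using h 0 N.zero_le
  simp only [coeff_taylorExt, h₀]
  refine Finset.sum_congr rfl fun n _ => congrArg _ (coeff_pow_eq_of_coeff_eq (fun M hM => ?_) n)
  rw [map_sub, map_sub, h M hM]

theorem taylorExt_eval (p : Polynomial ℝ) (T : ℝ⟦X⟧) :
    taylorExt (fun x => p.eval x) T = Polynomial.aeval T p := by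
  ext N
  have hshift : Polynomial.aeval T p =
      Polynomial.aeval (T - C (constantCoeff T)) (Polynomial.taylor (constantCoeff T) p) := by
    simp [Polynomial.taylor_apply, Polynomial.aeval_comp]
  rw [coeff_taylorExt, hshift, coeff_aeval_eq_sum_of_constantCoeff_eq_zero _ (by simp)]
  simp only [Polynomial.taylor_coeff_eq_iteratedDeriv_div]

/-- For smooth `f g : ℝ → ℝ` the Taylor extension is functorial with respect
to composition: `F_{f ∘ g}(T) = F_f(F_g(T))` for every `T ∈ ℝ⟦y⟧`. -/
theorem taylorExt_comp (f g : ℝ → ℝ)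
    (hf : ContDiff ℝ ((⊤ : ℕ∞) : WithTop ℕ∞) f)
    (hg : ContDiff ℝ ((⊤ : ℕ∞) : WithTop ℕ∞) g) (T : PowerSeries ℝ) :
    taylorExt (f ∘ g) T = taylorExt f (taylorExt g T) := by
  ext N
  set c := constantCoeff T
  set P := taylorPoly f (g c) N
  set Q := taylorPoly g c N
  have hP : ∀ k ≤ N, iteratedDeriv k (fun x => P.eval x) (g c) = iteratedDeriv k f (g c) :=
    fun k => iteratedDeriv_eval_taylorPoly f (g c)
  have hQ : ∀ k ≤ N, iteratedDeriv k (fun x => Q.eval x) c = iteratedDeriv k g c :=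
    fun k => iteratedDeriv_eval_taylorPoly g c
  have hQc : Q.eval c = g c := by simpa using hQ 0 N.zero_le
  have hPQ : ((fun x => P.eval x) ∘ fun x => Q.eval x) = fun x => (P.comp Q).eval x :=
    funext fun x => (Polynomial.eval_comp ..).symm
  calc coeff N (taylorExt (f ∘ g) T)
      = coeff N (taylorExt ((fun x => P.eval x) ∘ fun x => Q.eval x) T) := by
        refine coeff_taylorExt_eq_of_iteratedDeriv_eq T fun k hk => ?_
        exact iteratedDeriv_comp_eq_of_iteratedDeriv_eq (by exact_mod_cast le_top)
          hf.contDiffAt hg.contDiffAt (P.contDiff_eval _).contDiffAt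
          (Q.contDiff_eval _).contDiffAt hQc.symm
          (fun j hj => (hP j (hj.trans hk)).symm) (fun j hj => (hQ j (hj.trans hk)).symm)
    _ = coeff N (taylorExt (fun x => P.eval x) (taylorExt (fun x => Q.eval x) T)) := by
        rw [hPQ, taylorExt_eval, taylorExt_eval, taylorExt_eval, Polynomial.aeval_comp]
    _ = coeff N (taylorExt (fun x => P.eval x) (taylorExt g T)) :=
        coeff_taylorExt_eq_of_coeff_eq _ fun M hM =>
          coeff_taylorExt_eq_of_iteratedDeriv_eq T fun k hk => hQ k (hk.trans hM)
    _ = coeff N (taylorExt f (taylorExt g T)) :=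
        coeff_taylorExt_eq_of_iteratedDeriv_eq _ fun k hk => by
          rw [constantCoeff_taylorExt, hP k hk]
end

section
/- (Lagrange inversion formula) Let K be a field of characteristic zero and let f, g ∈ K⟦t⟧ be formal power series with zero constant coefficient and linear coefficient equal to 1, which are compositional inverses of each other (substituting g into f yields t). Write f = t·u where u ∈ K⟦t⟧ has constant coefficient 1 (so u is a unit). Then for every n ≥ 1: n · (coefficient of t^n in g) = coefficient of t^{n−1} in u^{−n}. -/
/-- Composition (substitution) of formal power series: `psComp f g` is the
series obtained by substituting `g` into `f`, defined coefficientwise by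
`coeff n (f ∘ g) = ∑_{m ≤ n} f_m · coeff n (gᵐ)`. When `g` has zero constant
coefficient this is the usual substitution, since `gᵐ` then has order at
least `m` and contributes nothing to coefficients below `m`. -/
noncomputable def psComp {K : Type*} [CommRing K] (f g : PowerSeries K) :
    PowerSeries K :=
  PowerSeries.mk fun n : ℕ =>
    ∑ m ∈ Finset.range (n + 1),
      PowerSeries.coeff m f * PowerSeries.coeff n (g ^ m)

/-! Differentiating `g ∘ f = X` gives `(g' ∘ f) · f' = 1`, hence `u⁻ⁿ = ∑ₖ g'ₖ · fᵏ f' u⁻ⁿ`.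
Writing `m = n - 1 - k`, one has `fᵏ f' u⁻ⁿ = Xᵏ (u⁻ᵐ + X u' u⁻ᵐ⁻¹)`, and for `m ≥ 1` the
bracket is `h - X h' / m` with `h = u⁻ᵐ`, whose coefficient of `Xᵐ` vanishes: the formal
counterpart of a derivative having no residue. So only `k = n - 1` survives in the coefficient
of `Xⁿ⁻¹`, which therefore equals `g'ₙ₋₁ = n gₙ`. -/

open Finset

namespace PowerSeries

section CommRing

variable {R : Type*} [CommRing R]

theorem coeff_X_mul_derivative (h : R⟦X⟧) (m : ℕ) :
    coeff m (X * d⁄dX R h) = m * coeff m h := by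
  rcases m with _ | m
  · simp
  · rw [coeff_succ_X_mul, coeff_derivative]
    push_cast
    ring

theorem coeff_pow_eq_zero_of_lt {f : R⟦X⟧} (hf : constantCoeff f = 0) {i k : ℕ}
    (hik : i < k) : coeff i (f ^ k) = 0 :=
  X_pow_dvd_iff.mp (pow_dvd_pow_of_dvd (X_dvd_iff.mpr hf) k) i hik

theorem coeff_subst_eq_sum_range {P f : R⟦X⟧} (hf : constantCoeff f = 0) {i N : ℕ}
    (hi : i ≤ N) :
    coeff i (P.subst f) = ∑ k ∈ range (N + 1), coeff k P * coeff i (f ^ k) := by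
  rw [coeff_subst' (HasSubst.of_constantCoeff_zero' hf)]
  refine finsum_eq_finsetSum_of_support_subset _ fun k hk => ?_
  by_contra hkN
  simp only [coe_range, Set.mem_Iio, not_lt] at hkN
  exact hk (by simp only [coeff_pow_eq_zero_of_lt hf (show i < k by omega), smul_zero])

theorem psComp_eq_subst {P f : R⟦X⟧} (hf : constantCoeff f = 0) : psComp P f = P.subst f := by
  ext i
  rw [psComp, coeff_mk, coeff_subst_eq_sum_range hf le_rfl]

theorem coeff_subst_mul {P f : R⟦X⟧} (hf : constantCoeff f = 0) (Q : R⟦X⟧) (N : ℕ) :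
    coeff N (P.subst f * Q) = ∑ k ∈ range (N + 1), coeff k P * coeff N (f ^ k * Q) := by
  simp_rw [coeff_mul, mul_sum]
  rw [sum_comm]
  refine sum_congr rfl fun ij hij => ?_
  rw [coeff_subst_eq_sum_range hf (mem_antidiagonal.mp hij ▸ Nat.le_add_right _ _), sum_mul]
  simp_rw [mul_assoc]

theorem derivative_subst_mul_derivative_eq_one {f g : R⟦X⟧} (hf : constantCoeff f = 0)
    (hgf : g.subst f = X) : (d⁄dX R g).subst f * d⁄dX R f = 1 := by
  rw [← derivative_subst (HasSubst.of_constantCoeff_zero' hf), hgf, derivative_X]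

end CommRing

section Field

variable {K : Type*} [Field K]

theorem derivative_inv_pow (u : K⟦X⟧) (m : ℕ) :
    d⁄dX K (u⁻¹ ^ m) = -(m * u⁻¹ ^ (m + 1) * d⁄dX K u) := by
  rcases m with _ | m
  · simp
  · rw [derivative_pow, derivative_inv']
    push_cast
    ring

theorem coeff_inv_pow_add_X_mul_derivative [CharZero K] (u : K⟦X⟧) (m : ℕ) :
    coeff m (u⁻¹ ^ m + X * d⁄dX K u * u⁻¹ ^ (m + 1)) = if m = 0 then 1 else 0 := by
  rcases eq_or_ne m 0 with rfl | hm
  · simp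
  rw [if_neg hm]
  have hscaled : (m : K⟦X⟧) * (u⁻¹ ^ m + X * d⁄dX K u * u⁻¹ ^ (m + 1)) =
      (m : K⟦X⟧) * u⁻¹ ^ m - X * d⁄dX K (u⁻¹ ^ m) := by
    rw [derivative_inv_pow]
    ring
  have hcoeff := congrArg (coeff m) hscaled
  rw [← map_natCast (C (R := K)), coeff_C_mul, map_sub, coeff_C_mul, coeff_X_mul_derivative,
    sub_self] at hcoeff
  exact (mul_eq_zero.mp hcoeff).resolve_left (Nat.cast_ne_zero.mpr hm)

theorem coeff_pow_mul_derivative_mul_inv_pow [CharZero K] {u : K⟦X⟧}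
    (hu : constantCoeff u ≠ 0) {k N : ℕ} (hk : k ≤ N) :
    coeff N ((X * u) ^ k * (d⁄dX K (X * u) * u⁻¹ ^ (N + 1))) = if k = N then 1 else 0 := by
  obtain ⟨m, rfl⟩ := Nat.exists_eq_add_of_le hk
  have huw : u * u⁻¹ = 1 := PowerSeries.mul_inv_cancel u hu
  have hexpand : (X * u) ^ k * (d⁄dX K (X * u) * u⁻¹ ^ (k + m + 1)) =
      X ^ k * (u⁻¹ ^ m + X * d⁄dX K u * u⁻¹ ^ (m + 1)) := by
    calc (X * u) ^ k * (d⁄dX K (X * u) * u⁻¹ ^ (k + m + 1))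
        = X ^ k * ((u * u⁻¹) ^ (k + 1) * u⁻¹ ^ m +
            X * d⁄dX K u * ((u * u⁻¹) ^ k * u⁻¹ ^ (m + 1))) := by
          rw [Derivation.leibniz, derivative_X, smul_eq_mul, smul_eq_mul]
          ring
      _ = _ := by rw [huw]; simp
  rw [hexpand, add_comm k m, coeff_X_pow_mul, coeff_inv_pow_add_X_mul_derivative]
  simp

end Field

end PowerSeries

open PowerSeries

theorem lagrange_inversion_general {K : Type*} [Field K] [CharZero K]
    (f g u : PowerSeries K)
    (hf0 : PowerSeries.constantCoeff f = 0)
    (hgf : psComp g f = PowerSeries.X)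
    (hu : f = PowerSeries.X * u)
    (hu0 : PowerSeries.constantCoeff u = 1)
    (n : ℕ) (hn : 1 ≤ n) :
    (n : K) * PowerSeries.coeff n g =
      PowerSeries.coeff (n - 1) (u⁻¹ ^ n) := by
  obtain ⟨N, rfl⟩ := Nat.exists_eq_add_of_le' hn
  have hchain : (d⁄dX K g).subst f * d⁄dX K f = 1 :=
    derivative_subst_mul_derivative_eq_one hf0 (psComp_eq_subst hf0 ▸ hgf)
  have hdelta : ∀ k ∈ range (N + 1),
      coeff N (f ^ k * (d⁄dX K f * u⁻¹ ^ (N + 1))) = if k = N then 1 else 0 := fun k hk =>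
    hu ▸ coeff_pow_mul_derivative_mul_inv_pow (hu0 ▸ one_ne_zero) (mem_range_succ_iff.mp hk)
  calc ((N + 1 : ℕ) : K) * coeff (N + 1) g = coeff N (d⁄dX K g) := by
        rw [coeff_derivative]; push_cast; ring
    _ = ∑ k ∈ range (N + 1),
          coeff k (d⁄dX K g) * coeff N (f ^ k * (d⁄dX K f * u⁻¹ ^ (N + 1))) := by
        rw [sum_congr rfl fun k hk => by rw [hdelta k hk]]
        simp
    _ = coeff N (u⁻¹ ^ (N + 1)) := by
        rw [← coeff_subst_mul hf0, ← mul_assoc, hchain, one_mul]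

/-- **Lagrange inversion formula.** Let `K` be a field of characteristic zero
and let `f, g ∈ K⟦t⟧` have zero constant coefficient and linear coefficient
`1`, and be compositional inverses of each other.  Writing `f = t·u` with `u`
of constant coefficient `1`, for every `n ≥ 1`:
`n · (coeff of tⁿ in g) = coeff of t^{n−1} in u^{−n}`. -/
theorem lagrange_inversion {K : Type*} [Field K] [CharZero K]
    (f g u : PowerSeries K)
    (hf0 : PowerSeries.constantCoeff f = 0)
    (hg0 : PowerSeries.constantCoeff g = 0)
    (hf1 : PowerSeries.coeff 1 f = 1)
    (hg1 : PowerSeries.coeff 1 g = 1)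
    (hfg : psComp f g = PowerSeries.X)
    (hgf : psComp g f = PowerSeries.X)
    (hu : f = PowerSeries.X * u)
    (hu0 : PowerSeries.constantCoeff u = 1)
    (n : ℕ) (hn : 1 ≤ n) :
    (n : K) * PowerSeries.coeff n g =
      PowerSeries.coeff (n - 1) (u⁻¹ ^ n) :=
  lagrange_inversion_general f g u hf0 hgf hu hu0 n hn
end

section
/- The real power series Σ_{n≥1} (−1)^{n−1} (n^{n−1}/n!) x^n defining Lambert's W-function has radius of convergence exactly 1/e: for every real x with |x| < e^{−1} the family ((−1)^{n−1} n^{n−1}/n! · x^n)_{n≥1} is (absolutely) summable, and for every real x with |x| > e^{−1} it is not summable. -/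
/-!
Ratio test. For `n ≥ 1` the quotient of the absolute values of consecutive terms is
`((n + 1) / n) ^ (n - 1) * |x| = (1 + 1 / n) ^ (n - 1) * |x|`, which tends to `e * |x|`.
-/

open scoped Nat

open Filter Topology Real

theorem tendsto_one_add_div_succ_pow_exp (t : ℝ) :
    Tendsto (fun k : ℕ => (1 + t / (k + 1)) ^ k) atTop (𝓝 (exp t)) := by
  have hsucc : Tendsto (fun k : ℕ => (1 + t / (k + 1)) ^ (k + 1)) atTop (𝓝 (exp t)) := by
    simpa [Function.comp_def] using (tendsto_one_add_div_pow_exp t).comp (tendsto_add_atTop_nat 1)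
  have hbase : Tendsto (fun k : ℕ => 1 + t / (k + 1)) atTop (𝓝 1) := by
    simpa using (tendsto_const_div_atTop_nhds_zero_nat t).comp (tendsto_add_atTop_nat 1)
      |>.const_add 1
  refine (div_one (exp t) ▸ hsucc.div hbase one_ne_zero).congr' ?_
  filter_upwards [hbase.eventually_ne one_ne_zero] with k hk
  simp only [Pi.div_apply, pow_succ, mul_div_cancel_right₀ _ hk]

theorem summable_subtype_one_le_iff {α : Type*} [AddCommMonoid α] [TopologicalSpace α]
    {f : ℕ → α} : (Summable fun n : {n : ℕ // 1 ≤ n} => f n) ↔ Summable fun k => f (k + 1) := by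
  refine (Function.Injective.summable_iff
    (g := fun k : ℕ => (⟨k + 1, k.succ_pos⟩ : {n : ℕ // 1 ≤ n}))
    (fun a b h => by simpa using h) fun n hn => absurd ⟨n - 1, ?_⟩ hn).symm
  ext; simp; omega

noncomputable def lambertTerm (x : ℝ) (n : ℕ) : ℝ :=
  (-1) ^ (n - 1) * (n : ℝ) ^ (n - 1) / n ! * x ^ n

theorem norm_lambertTerm_succ (x : ℝ) (k : ℕ) :
    ‖lambertTerm x (k + 1)‖ = (k + 1 : ℝ) ^ k / (k + 1)! * |x| ^ (k + 1) := by
  simp [lambertTerm, abs_of_nonneg (by positivity : (0:ℝ) ≤ k + 1)]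

theorem norm_lambertTerm_ratio {x : ℝ} (hx : x ≠ 0) (k : ℕ) :
    ‖lambertTerm x (k + 1 + 1)‖ / ‖lambertTerm x (k + 1)‖ = (1 + 1 / (k + 1)) ^ k * |x| := by
  have hx' : |x| ≠ 0 := abs_ne_zero.mpr hx
  rw [norm_lambertTerm_succ, norm_lambertTerm_succ, Nat.factorial_succ (k + 1),
    show (1 + 1 / (k + 1) : ℝ) = (k + 2) / (k + 1) by field_simp; ring, div_pow]
  push_cast
  field_simp
  ring

theorem tendsto_norm_lambertTerm_ratio {x : ℝ} (hx : x ≠ 0) :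
    Tendsto (fun k => ‖lambertTerm x (k + 1 + 1)‖ / ‖lambertTerm x (k + 1)‖) atTop
      (𝓝 (exp 1 * |x|)) := by
  simpa only [norm_lambertTerm_ratio hx] using
    (tendsto_one_add_div_succ_pow_exp 1).mul_const |x|

/-- The power series `∑_{n ≥ 1} (−1)^{n−1} (n^{n−1}/n!) xⁿ` defining
Lambert's W-function has radius of convergence exactly `1/e`: the family of
its terms is summable whenever `|x| < e⁻¹` and not summable whenever
`|x| > e⁻¹`. -/
theorem lambertW_radius_of_convergence :
    (∀ x : ℝ, |x| < (Real.exp 1)⁻¹ →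
      Summable fun n : {n : ℕ // 1 ≤ n} =>
        (-1 : ℝ) ^ ((n : ℕ) - 1) * ((n : ℕ) : ℝ) ^ ((n : ℕ) - 1) / (n : ℕ)! *
          x ^ (n : ℕ)) ∧
    (∀ x : ℝ, (Real.exp 1)⁻¹ < |x| →
      ¬ Summable fun n : {n : ℕ // 1 ≤ n} =>
        (-1 : ℝ) ^ ((n : ℕ) - 1) * ((n : ℕ) : ℝ) ^ ((n : ℕ) - 1) / (n : ℕ)! *
          x ^ (n : ℕ)) := by
  refine ⟨fun x hx => (summable_subtype_one_le_iff (f := lambertTerm x)).mpr ?_,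
    fun x hx => mt (summable_subtype_one_le_iff (f := lambertTerm x)).mp ?_⟩
  · rcases eq_or_ne x 0 with rfl | hx0
    · simp [lambertTerm]
    refine summable_of_ratio_test_tendsto_lt_one ?_ (.of_forall fun k => ?_)
      (tendsto_norm_lambertTerm_ratio hx0)
    · rwa [← lt_inv_mul_iff₀ (exp_pos 1), mul_one]
    · rw [← norm_pos_iff, norm_lambertTerm_succ]
      positivity
  · refine not_summable_of_ratio_test_tendsto_gt_one ?_
      (tendsto_norm_lambertTerm_ratio (abs_pos.mp ((inv_pos.mpr (exp_pos 1)).trans hx)))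
    exact (inv_lt_iff_one_lt_mul₀' (exp_pos 1)).mp hx
end

section
/- Let K be a commutative ring, λ ∈ K, and let V be the free K-module with basis (e_n)_{n≥1}. Define the bilinear product ▷ on V by e_p ▷ e_q := (q + λ)·e_{p+q} for p, q ≥ 1. Then ▷ is a left pre-Lie product, i.e. for all a, b, c ∈ V: a ▷ (b ▷ c) − (a ▷ b) ▷ c = b ▷ (a ▷ c) − (b ▷ a) ▷ c; and its antisymmetrization is independent of λ and satisfies e_p ▷ e_q − e_q ▷ e_p = (q − p)·e_{p+q} (the Witt-type Lie bracket on the Lie algebra L₁ of formal vector fields). -/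
/-!
On basis vectors the associator is
`e_p ▷ (e_q ▷ e_r) - (e_p ▷ e_q) ▷ e_r = ((r + λ)(q + r + λ) - (q + λ)(r + λ)) e_{p+q+r}`,
that is `r (r + λ) e_{p+q+r}`, which does not depend on `p` and `q`. Since the associator is
additive in each argument, its symmetry in the first two extends from basis vectors to all of `V`.
-/

/-- The bilinear product `▷` on the free `K`-module with basis `(e_n)_{n ≥ 1}`
(realized as `ℕ+ →₀ K` with `e_n = Finsupp.single n 1`) determined by
`e_p ▷ e_q = (q + λ)·e_{p+q}`. -/
noncomputable def prelieProd {K : Type*} [CommRing K] (lam : K)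
    (a b : ℕ+ →₀ K) : ℕ+ →₀ K :=
  a.sum fun p ap =>
    b.sum fun q bq => Finsupp.single (p + q) (ap * bq * (((q : ℕ) : K) + lam))

section

variable {K : Type*} [CommRing K] (lam : K)

@[simp]
lemma prelieProd_zero_left (b : ℕ+ →₀ K) : prelieProd lam 0 b = 0 := by
  simp [prelieProd]

@[simp]
lemma prelieProd_zero_right (a : ℕ+ →₀ K) : prelieProd lam a 0 = 0 := by
  simp [prelieProd]

lemma prelieProd_add_left (a a' b : ℕ+ →₀ K) :
    prelieProd lam (a + a') b = prelieProd lam a b + prelieProd lam a' b := by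
  unfold prelieProd
  rw [Finsupp.sum_add_index']
  · simp
  · intro p x y
    simp [add_mul, Finsupp.single_add, Finsupp.sum_add]

lemma prelieProd_add_right (a b b' : ℕ+ →₀ K) :
    prelieProd lam a (b + b') = prelieProd lam a b + prelieProd lam a b' := by
  unfold prelieProd
  rw [← Finsupp.sum_add]
  refine Finsupp.sum_congr fun p _ => ?_
  rw [Finsupp.sum_add_index']
  · simp
  · intro q x y
    simp only [mul_add, add_mul, Finsupp.single_add]
    abel

@[simp]
lemma prelieProd_single_single (p q : ℕ+) (x y : K) :
    prelieProd lam (Finsupp.single p x) (Finsupp.single q y) =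
      Finsupp.single (p + q) (x * y * (((q : ℕ) : K) + lam)) := by
  unfold prelieProd
  rw [Finsupp.sum_single_index, Finsupp.sum_single_index] <;> simp

noncomputable def prelieAssoc (a b c : ℕ+ →₀ K) : ℕ+ →₀ K :=
  prelieProd lam a (prelieProd lam b c) - prelieProd lam (prelieProd lam a b) c

@[simp]
lemma prelieAssoc_zero_left (b c : ℕ+ →₀ K) : prelieAssoc lam 0 b c = 0 := by
  simp [prelieAssoc]

@[simp]
lemma prelieAssoc_zero_middle (a c : ℕ+ →₀ K) : prelieAssoc lam a 0 c = 0 := by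
  simp [prelieAssoc]

@[simp]
lemma prelieAssoc_zero_right (a b : ℕ+ →₀ K) : prelieAssoc lam a b 0 = 0 := by
  simp [prelieAssoc]

lemma prelieAssoc_add_left (a a' b c : ℕ+ →₀ K) :
    prelieAssoc lam (a + a') b c = prelieAssoc lam a b c + prelieAssoc lam a' b c := by
  simp only [prelieAssoc, prelieProd_add_left]
  abel

lemma prelieAssoc_add_middle (a b b' c : ℕ+ →₀ K) :
    prelieAssoc lam a (b + b') c = prelieAssoc lam a b c + prelieAssoc lam a b' c := by
  simp only [prelieAssoc, prelieProd_add_left, prelieProd_add_right]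
  abel

lemma prelieAssoc_add_right (a b c c' : ℕ+ →₀ K) :
    prelieAssoc lam a b (c + c') = prelieAssoc lam a b c + prelieAssoc lam a b c' := by
  simp only [prelieAssoc, prelieProd_add_right]
  abel

lemma prelieAssoc_single (p q r : ℕ+) (x y z : K) :
    prelieAssoc lam (Finsupp.single p x) (Finsupp.single q y) (Finsupp.single r z) =
      Finsupp.single (p + q + r) (x * y * z * (((r : ℕ) : K) * (((r : ℕ) : K) + lam))) := by
  simp only [prelieAssoc, prelieProd_single_single, ← add_assoc, ← Finsupp.single_sub]
  congr 1
  push_cast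
  ring

lemma prelieAssoc_comm (a b c : ℕ+ →₀ K) : prelieAssoc lam a b c = prelieAssoc lam b a c := by
  induction a using Finsupp.induction_linear with
  | zero => simp
  | add a a' ha ha' => rw [prelieAssoc_add_left, prelieAssoc_add_middle, ha, ha']
  | single p x =>
    induction b using Finsupp.induction_linear with
    | zero => simp
    | add b b' hb hb' => rw [prelieAssoc_add_left, prelieAssoc_add_middle, hb, hb']
    | single q y =>
      induction c using Finsupp.induction_linear with
      | zero => simp
      | add c c' hc hc' => rw [prelieAssoc_add_right, prelieAssoc_add_right, hc, hc']
      | single r z => rw [prelieAssoc_single, prelieAssoc_single, add_comm p q, mul_comm x y]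

lemma prelieProd_sub_swap_single_one (p q : ℕ+) :
    prelieProd lam (Finsupp.single p (1 : K)) (Finsupp.single q 1) -
        prelieProd lam (Finsupp.single q 1) (Finsupp.single p 1) =
      (((q : ℕ) : ℤ) - ((p : ℕ) : ℤ)) • Finsupp.single (p + q) (1 : K) := by
  rw [prelieProd_single_single, prelieProd_single_single, add_comm q p, ← Finsupp.single_sub,
    Finsupp.smul_single, zsmul_eq_mul, mul_one]
  congr 1
  push_cast
  ring

end

/-- The product `e_p ▷ e_q = (q + λ)·e_{p+q}` is left pre-Lie (its associator
is symmetric in the first two arguments), and its antisymmetrization is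
independent of `λ`: `e_p ▷ e_q − e_q ▷ e_p = (q − p)·e_{p+q}`, the Witt-type
bracket on the Lie algebra `L₁` of formal vector fields. -/
theorem prelieProd_is_preLie {K : Type*} [CommRing K] (lam : K) :
    (∀ a b c : ℕ+ →₀ K,
      prelieProd lam a (prelieProd lam b c) -
          prelieProd lam (prelieProd lam a b) c =
        prelieProd lam b (prelieProd lam a c) -
          prelieProd lam (prelieProd lam b a) c) ∧
    (∀ p q : ℕ+,
      prelieProd lam (Finsupp.single p (1 : K)) (Finsupp.single q (1 : K)) -
          prelieProd lam (Finsupp.single q (1 : K)) (Finsupp.single p (1 : K)) =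
        (((q : ℕ) : ℤ) - ((p : ℕ) : ℤ)) • Finsupp.single (p + q) (1 : K)) :=
  ⟨prelieAssoc_comm lam, prelieProd_sub_swap_single_one lam⟩
end

section
/- Composition of formal power series with non-commutative coefficients is not associative: there exist a (non-commutative) ring A and power series f, g, h over A, each with zero constant coefficient, such that (f ∘ g) ∘ h ≠ f ∘ (g ∘ h), where the composition f ∘ g is defined coefficientwise by coeff_n(f ∘ g) = Σ_{m=1}^{n} f_m · coeff_n(g^m) (the coefficient f_m multiplying from the left). -/
/-- Composition of formal power series with (possibly non-commutative)
coefficients: `coeff n (f ∘ g) = ∑_{m=1}^{n} f_m · coeff n (gᵐ)`, the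
coefficient `f_m` multiplying from the left. Since only `g` with zero
constant coefficient are considered, `gᵐ` has order at least `m` and the
defining sum for each coefficient is finite. -/
noncomputable def ncComp {A : Type*} [Ring A] (f g : PowerSeries A) :
    PowerSeries A :=
  PowerSeries.mk fun n : ℕ =>
    ∑ m ∈ Finset.Icc 1 n,
      PowerSeries.coeff m f * PowerSeries.coeff n (g ^ m)

/-! Composition with a monomial is explicit: `C a * X ^ k ∘ g = C a * g ^ k`. Taking
`f = X ^ 2`, `g = C b * X`, `h = C c * X` gives `(f ∘ g) ∘ h = C (b² c²) * X²` but
`f ∘ (g ∘ h) = C ((b c)²) * X²`, so associativity fails as soon as `b² c² ≠ (b c)²`: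
for the matrix units `b = E₁₂`, `c = E₂₁` one has `b² = 0` but `(b c)² = E₁₁`. -/

open PowerSeries

theorem ncComp_C_mul_X_pow {A : Type*} [Ring A] (a : A) {k : ℕ} (hk : k ≠ 0)
    {g : PowerSeries A} (hg : constantCoeff g = 0) :
    ncComp (C a * X ^ k) g = C a * g ^ k := by
  ext n
  simp only [ncComp, coeff_mk, coeff_C_mul_X_pow, ite_mul, zero_mul, Finset.sum_ite_eq',
    Finset.mem_Icc]
  rw [coeff_C_mul]
  split_ifs with hkn
  · rfl
  · have hnk : (n : ℕ∞) < k := by exact_mod_cast (by omega : n < k)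
    rw [coeff_of_lt_order n (hnk.trans_le (le_order_pow_of_constantCoeff_eq_zero k hg)),
      mul_zero]

theorem ncComp_X_pow {A : Type*} [Ring A] {k : ℕ} (hk : k ≠ 0) {g : PowerSeries A}
    (hg : constantCoeff g = 0) : ncComp (X ^ k) g = g ^ k := by
  simpa using ncComp_C_mul_X_pow 1 hk hg

theorem pow_C_mul_X {A : Type*} [Ring A] (a : A) (k : ℕ) : (C a * X) ^ k = C (a ^ k) * X ^ k := by
  rw [(commute_X (C a)).mul_pow, map_pow]

theorem ncComp_ncComp_X_sq_C_mul_X {A : Type*} [Ring A] (b c : A) :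
    ncComp (ncComp (X ^ 2) (C b * X)) (C c * X) = C (b ^ 2 * c ^ 2) * X ^ 2 := by
  rw [ncComp_X_pow two_ne_zero (by simp), pow_C_mul_X,
    ncComp_C_mul_X_pow _ two_ne_zero (by simp), pow_C_mul_X, map_mul, mul_assoc]

theorem ncComp_X_sq_ncComp_C_mul_X {A : Type*} [Ring A] (b c : A) :
    ncComp (X ^ 2) (ncComp (C b * X) (C c * X)) = C ((b * c) ^ 2) * X ^ 2 := by
  rw [← pow_one (X : PowerSeries A), ncComp_C_mul_X_pow _ one_ne_zero (by simp), pow_one,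
    pow_one, ← mul_assoc, ← map_mul, ncComp_X_pow two_ne_zero (by simp), pow_C_mul_X]

theorem ncComp_ncComp_ne_of_sq_mul_sq_ne {A : Type*} [Ring A] {b c : A}
    (hbc : b ^ 2 * c ^ 2 ≠ (b * c) ^ 2) :
    ncComp (ncComp (X ^ 2) (C b * X)) (C c * X) ≠
      ncComp (X ^ 2) (ncComp (C b * X) (C c * X)) := by
  rw [ncComp_ncComp_X_sq_C_mul_X, ncComp_X_sq_ncComp_C_mul_X]
  intro h
  apply hbc
  simpa only [coeff_C_mul_X_pow, ↓reduceIte] using congrArg (coeff 2) h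

/-- Composition of formal power series with non-commutative coefficients is
not associative: there are a ring `A` and `f, g, h ∈ A⟦t⟧` with zero constant
coefficients such that `(f ∘ g) ∘ h ≠ f ∘ (g ∘ h)`. -/
theorem ncComp_not_associative :
    ∃ (A : RingCat) (f g h : PowerSeries A),
      PowerSeries.constantCoeff f = 0 ∧
      PowerSeries.constantCoeff g = 0 ∧
      PowerSeries.constantCoeff h = 0 ∧
      ncComp (ncComp f g) h ≠ ncComp f (ncComp g h) := by
  refine ⟨RingCat.of (ULift (Matrix (Fin 2) (Fin 2) ℤ)), X ^ 2, C ⟨!![0, 1; 0, 0]⟩ * X,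
    C ⟨!![0, 0; 1, 0]⟩ * X, by simp, by simp, by simp, ncComp_ncComp_ne_of_sq_mul_sq_ne ?_⟩
  decide
end

section
/- (Generating function of the Bell polynomials.) Let A be a commutative ℚ-algebra and let x_1, x_2, … ∈ A. In A⟦t⟧ let h := Σ_{k≥1} (x_k/k!) t^k. Then for all n ≥ 1 and m ≥ 0: n! · (coefficient of t^n in h^m) = m! · Σ_{π} ∏_{B ∈ π} x_{|B|}, where the sum runs over all set partitions π of {1,…,n} having exactly m blocks, and |B| denotes the cardinality of the block B. (Equivalently, the coefficient of the monomial ∏ x_j^{k_j} in the Bell polynomial B_{n,m} counts the partitions of an n-set with k_j blocks of size j.) -/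
open scoped Nat

/-!
Write `egf y = ∑ y k tᵏ / k!`. Differentiating a product of exponential generating functions by
the Leibniz rule and inducting on `n` shows that `n! [tⁿ] ∏_{b ∈ β} egf (y_b)` is the sum, over all
maps `f : Fin n → β`, of `∏_b y_b |f⁻¹(b)|`: deleting the point `0` from the domain of `f` lowers
one fibre size by one, exactly as the derivative shifts one of the sequences `y_b`. Since
`h = egf y` with `y 0 = 0`, only the surjections `Fin n → Fin m` contribute to `hᵐ`, and these are
precisely the set partitions of `Fin n` into `m` blocks together with one of the `m!` labellings
of their blocks.
-/

open Finset Function PowerSeries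

theorem Derivation.leibniz_finsetProd {R A M : Type*} [CommSemiring R] [CommSemiring A]
    [Algebra R A] [AddCommMonoid M] [Module A M] [Module R M] (D : Derivation R A M)
    {ι : Type*} [DecidableEq ι] (s : Finset ι) (f : ι → A) :
    D (∏ i ∈ s, f i) = ∑ i ∈ s, (∏ j ∈ s.erase i, f j) • D (f i) := by
  induction s using Finset.induction_on with
  | empty => simp
  | insert a s ha ih =>
    rw [prod_insert ha, D.leibniz, ih, sum_insert ha, erase_insert ha, smul_sum, add_comm]
    congr 1
    refine sum_congr rfl fun i hi => ?_
    rw [erase_insert_of_ne (ne_of_mem_of_not_mem hi ha).symm,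
      prod_insert (fun h => ha (mem_of_mem_erase h)), mul_smul]

section FiberCount

variable {M ι : Type*} [CommSemiring M] [DecidableEq ι]

theorem card_fiber_cons {n : ℕ} (i : ι) (f : Fin n → ι) (j : ι) :
    #{a | (Fin.cons i f : Fin (n + 1) → ι) a = j} = #{a | f a = j} + if i = j then 1 else 0 := by
  rw [Fin.card_filter_univ_succ', add_comm]
  simp

theorem sum_prod_card_fiber_fin_succ [Fintype ι] (y : ι → ℕ → M) (n : ℕ) :
    ∑ f : Fin (n + 1) → ι, ∏ j, y j #{a | f a = j} =
      ∑ i, ∑ f : Fin n → ι, ∏ j, update y i (fun k => y i (k + 1)) j #{a | f a = j} := by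
  rw [← (Fin.consEquiv fun _ => ι).sum_comp, Fintype.sum_prod_type]
  refine sum_congr rfl fun i _ => sum_congr rfl fun f _ => prod_congr rfl fun j _ => ?_
  change y j #{a | (Fin.cons i f : Fin (n + 1) → ι) a = j} = _
  rw [card_fiber_cons]
  rcases eq_or_ne i j with rfl | hij
  · simp
  · simp [hij, update_of_ne hij.symm]

theorem sum_prod_card_fiber_eq_sum_surjective {α : Type*} [Fintype α] [DecidableEq α] [Fintype ι]
    (y : ℕ → M) (hy : y 0 = 0) :
    ∑ f : α → ι, ∏ i, y #{a | f a = i} = ∑ f : α → ι with Surjective f, ∏ i, y #{a | f a = i} := by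
  refine (sum_filter_of_ne fun f _ hf i => ?_).symm
  by_contra hi
  refine hf (prod_eq_zero (mem_univ i) ?_)
  rw [card_eq_zero.2 (filter_eq_empty_iff.2 fun a _ ha => hi ⟨a, ha⟩), hy]

end FiberCount

section ExponentialGeneratingFunction

variable {A : Type*} [CommSemiring A] [Algebra ℚ A]

noncomputable def egf (y : ℕ → A) : A⟦X⟧ := PowerSeries.mk fun k => (k ! : ℚ)⁻¹ • y k

theorem coeff_egf (y : ℕ → A) (k : ℕ) : coeff k (egf y) = (k ! : ℚ)⁻¹ • y k := coeff_mk _ _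

theorem derivative_egf (y : ℕ → A) : d⁄dX A (egf y) = egf fun k => y (k + 1) := by
  ext k
  rw [coeff_derivative, coeff_egf, coeff_egf, ← Nat.cast_succ, ← map_natCast (algebraMap ℚ A),
    mul_comm, ← Algebra.smul_def, smul_smul, Nat.factorial_succ, Nat.cast_mul, mul_inv,
    ← mul_assoc, mul_inv_cancel₀ (by positivity), one_mul]

theorem factorial_succ_smul_coeff_succ (f : A⟦X⟧) (n : ℕ) :
    ((n + 1)! : ℚ) • coeff (n + 1) f = (n ! : ℚ) • coeff n (d⁄dX A f) := by
  rw [coeff_derivative, ← Nat.cast_succ, ← map_natCast (algebraMap ℚ A), mul_comm,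
    ← Algebra.smul_def, smul_smul, Nat.factorial_succ, Nat.cast_mul, mul_comm]

variable {ι : Type*} [Fintype ι] [DecidableEq ι]

theorem derivative_prod_egf (y : ι → ℕ → A) :
    d⁄dX A (∏ i, egf (y i)) = ∑ i, ∏ j, egf (update y i (fun k => y i (k + 1)) j) := by
  rw [Derivation.leibniz_finsetProd]
  refine sum_congr rfl fun i _ => ?_
  simp_rw [apply_update (fun _ => egf), prod_update_of_mem (mem_univ i),
    sdiff_singleton_eq_erase, derivative_egf, smul_eq_mul, mul_comm]

theorem factorial_smul_coeff_prod_egf (n : ℕ) (y : ι → ℕ → A) :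
    (n ! : ℚ) • coeff n (∏ i, egf (y i)) = ∑ f : Fin n → ι, ∏ i, y i #{a | f a = i} := by
  induction n generalizing y with
  | zero => simp [← coeff_zero_eq_constantCoeff_apply, coeff_egf]
  | succ n ih =>
    rw [factorial_succ_smul_coeff_succ, derivative_prod_egf, map_sum, smul_sum,
      sum_prod_card_fiber_fin_succ]
    exact sum_congr rfl fun i _ => ih _

end ExponentialGeneratingFunction

theorem injective_fiber_of_surjective {α β : Type*} [Fintype α] [DecidableEq β] {f : α → β}
    (hf : Surjective f) : Injective fun b => ({a | f a = b} : Finset α) := by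
  intro b c hbc
  obtain ⟨a, rfl⟩ := hf b
  have : a ∈ ({x | f x = c} : Finset α) := by simp only at hbc; simp [← hbc]
  simpa using this

namespace Finpartition

variable {α β : Type*} [Fintype α] [DecidableEq α] [DecidableEq β]
  {π : Finpartition (univ : Finset α)} {f : α → β}

def ofFibers (f : α → β) : Finpartition (univ : Finset α) := ofSetoid (Setoid.ker f)

def label (π : Finpartition (univ : Finset α)) (e : β ≃ π.parts) (a : α) : β :=
  e.symm ⟨π.part a, π.part_mem.2 (mem_univ a)⟩

theorem fiber_label (e : β ≃ π.parts) (b : β) : ({a | π.label e a = b} : Finset α) = e b := by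
  ext a
  rw [mem_filter, label, Equiv.symm_apply_eq, Subtype.ext_iff, π.part_eq_iff_mem (e b).2]
  simp

theorem surjective_of_fiber_mem_parts (h : ∀ b, ({a | f a = b} : Finset α) ∈ π.parts) :
    Surjective f := by
  intro b
  obtain ⟨a, ha⟩ := π.nonempty_of_mem_parts (h b)
  exact ⟨a, by simpa using ha⟩

variable [Fintype β]

theorem parts_ofFibers (hf : Surjective f) :
    (ofFibers f).parts = univ.image fun b => ({a | f a = b} : Finset α) := by
  ext B
  simp [ofFibers, ofSetoid, ofSetSetoid_parts, Setoid.ker, hf.exists, eq_comm]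

theorem parts_eq_image_fiber (h : ∀ b, ({a | f a = b} : Finset α) ∈ π.parts) :
    π.parts = univ.image fun b => ({a | f a = b} : Finset α) := by
  ext B
  simp only [mem_image, mem_univ, true_and]
  refine ⟨fun hB => ?_, by rintro ⟨b, rfl⟩; exact h b⟩
  obtain ⟨a, ha⟩ := π.nonempty_of_mem_parts hB
  exact ⟨f a, π.eq_of_mem_parts (h (f a)) hB (by simp) ha⟩

theorem ofFibers_eq (h : ∀ b, ({a | f a = b} : Finset α) ∈ π.parts) : ofFibers f = π :=
  Finpartition.ext <| by
    rw [parts_ofFibers (surjective_of_fiber_mem_parts h), parts_eq_image_fiber h]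

theorem prod_parts_eq_prod_fiber {M : Type*} [CommMonoid M]
    (h : ∀ b, ({a | f a = b} : Finset α) ∈ π.parts) (w : Finset α → M) :
    ∏ B ∈ π.parts, w B = ∏ b, w {a | f a = b} := by
  rw [parts_eq_image_fiber h,
    prod_image (injective_fiber_of_surjective (surjective_of_fiber_mem_parts h)).injOn]

theorem card_fiber_mem_parts (hπ : #π.parts = Fintype.card β) :
    #{f : α → β | ∀ b, ({a | f a = b} : Finset α) ∈ π.parts} = (Fintype.card β)! := by
  have e₀ : β ≃ π.parts := Fintype.equivOfCardEq (by rw [Fintype.card_coe, hπ])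
  rw [← Fintype.card_equiv e₀, ← card_univ]
  symm
  refine card_bij (fun e _ => π.label e) (fun e _ => ?_) (fun e₁ _ e₂ _ h => ?_) (fun f hf => ?_)
  · simp only [mem_filter, mem_univ, true_and, fiber_label]
    exact fun b => (e b).2
  · ext b : 2
    rw [← fiber_label e₁, ← fiber_label e₂, h]
  · have hf : ∀ b, ({a | f a = b} : Finset α) ∈ π.parts := (mem_filter.1 hf).2
    have hbij : Bijective fun b => (⟨({a | f a = b} : Finset α), hf b⟩ : π.parts) := by
      refine ⟨fun b c hbc => ?_, ?_⟩
      · exact injective_fiber_of_surjective (surjective_of_fiber_mem_parts hf)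
          (congrArg Subtype.val hbc)
      · rintro ⟨B, hB⟩
        rw [parts_eq_image_fiber hf, mem_image] at hB
        obtain ⟨b, -, rfl⟩ := hB
        exact ⟨b, rfl⟩
    refine ⟨Equiv.ofBijective _ hbij, mem_univ _, funext fun a => ?_⟩
    rw [label, Equiv.symm_apply_eq, Subtype.ext_iff]
    exact π.part_eq_of_mem (hf (f a)) (by simp)

theorem sum_surjective_prod_fiber {M : Type*} [CommSemiring M] (w : Finset α → M) :
    ∑ f : α → β with Surjective f, ∏ b, w {a | f a = b} =
      (Fintype.card β)! • ∑ π : Finpartition (univ : Finset α) with #π.parts = Fintype.card β,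
        ∏ B ∈ π.parts, w B := by
  rw [← sum_fiberwise_of_maps_to (g := ofFibers) (t := {π | #π.parts = Fintype.card β}), smul_sum]
  · refine sum_congr rfl fun π hπ => ?_
    have hfib : ({f | Surjective f ∧ ofFibers f = π} : Finset (α → β)) =
        ({f | ∀ b, ({a | f a = b} : Finset α) ∈ π.parts} : Finset (α → β)) := by
      ext f
      simp only [mem_filter, mem_univ, true_and]
      refine ⟨fun ⟨hf, hfπ⟩ b => ?_, fun h => ⟨surjective_of_fiber_mem_parts h, ofFibers_eq h⟩⟩
      rw [← hfπ, parts_ofFibers hf]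
      exact mem_image_of_mem _ (mem_univ b)
    rw [filter_filter, hfib, ← card_fiber_mem_parts (mem_filter.1 hπ).2, ← sum_const]
    exact sum_congr rfl fun f hf => (prod_parts_eq_prod_fiber (mem_filter.1 hf).2 w).symm
  · intro f hf
    rw [mem_filter, parts_ofFibers (mem_filter.1 hf).2,
      card_image_of_injective _ (injective_fiber_of_surjective (mem_filter.1 hf).2)]
    simp

end Finpartition

theorem bell_polynomial_generating_function_general {A : Type*} [CommRing A]
    [Algebra ℚ A] (x : ℕ → A) (n m : ℕ) :
    (n ! : ℚ) • PowerSeries.coeff (R := A) n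
        ((PowerSeries.mk fun k : ℕ =>
          if k = 0 then 0 else ((k ! : ℚ)⁻¹) • x k) ^ m) =
      (m ! : ℚ) • ∑ π ∈ Finset.univ.filter
          (fun π : Finpartition (Finset.univ : Finset (Fin n)) =>
            π.parts.card = m),
        ∏ B ∈ π.parts, x B.card := by
  set y : ℕ → A := fun k => if k = 0 then 0 else x k
  have h_egf : (PowerSeries.mk fun k : ℕ => if k = 0 then 0 else ((k ! : ℚ)⁻¹) • x k) = egf y := by
    ext k
    simp [coeff_egf, y, smul_ite]
  have h_blocks (π : Finpartition (univ : Finset (Fin n))) :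
      ∏ B ∈ π.parts, y #B = ∏ B ∈ π.parts, x #B :=
    prod_congr rfl fun B hB => if_neg (π.nonempty_of_mem_parts hB).card_pos.ne'
  rw [h_egf, ← Fin.prod_const, factorial_smul_coeff_prod_egf,
    sum_prod_card_fiber_eq_sum_surjective y (if_pos rfl),
    Finpartition.sum_surjective_prod_fiber (fun B => y #B), Fintype.card_fin]
  simp_rw [h_blocks, Nat.cast_smul_eq_nsmul]

/-- **Generating function of the Bell polynomials.** Let `A` be a commutative
`ℚ`-algebra, `x₁, x₂, … ∈ A`, and `h := ∑_{k ≥ 1} (x_k/k!) tᵏ ∈ A⟦t⟧`.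
For all `n ≥ 1` and `m ≥ 0`:
`n! · (coeff of tⁿ in hᵐ) = m! · ∑_π ∏_{B ∈ π} x_{|B|}`,
the sum over all set partitions `π` of `{1,…,n}` with exactly `m` blocks. -/
theorem bell_polynomial_generating_function {A : Type*} [CommRing A]
    [Algebra ℚ A] (x : ℕ → A) (n m : ℕ) (hn : 1 ≤ n) :
    (n ! : ℚ) • PowerSeries.coeff (R := A) n
        ((PowerSeries.mk fun k : ℕ =>
          if k = 0 then 0 else ((k ! : ℚ)⁻¹) • x k) ^ m) =
      (m ! : ℚ) • ∑ π ∈ Finset.univ.filter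
          (fun π : Finpartition (Finset.univ : Finset (Fin n)) =>
            π.parts.card = m),
        ∏ B ∈ π.parts, x B.card :=
  bell_polynomial_generating_function_general x n m
end
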